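/- arXiv:1709.02094 — 6 statements merged into one kernel-verified Lean document; each statement's English description precedes it below -/
import Mathlib

section
/- If two traces ρ and ρ' of a Kripke structure have the same summary, then for every trace ρ_L such that lst(ρ_L) = fst(ρ) = fst(ρ'), the star-concatenations ρ_L ⋆ ρ and ρ_L ⋆ ρ' have the same summary; symmetrically, for every trace ρ_R such that lst(ρ) = lst(ρ') = fst(ρ_R), the traces ρ ⋆ ρ_R and ρ' ⋆ ρ_R have the same summary. -/
/-- A Kripke structure over proposition letters `AP` with states `S`. -/
structure Kripke (AP S : Type) where
  R : S → S → Prop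
  μ : S → Set AP
  s0 : S

variable {AP S : Type} {ι : Type} {Q : ι → Type}

/-- A trace is a nonempty finite word over `S` whose consecutive states are related by `R`. -/
def Kripke.IsTrace (K : Kripke AP S) (ρ : List S) : Prop :=
  ρ ≠ [] ∧ ρ.Chain' K.R

/-- The labeling sequence `μ(ρ)` induced by a trace. -/
def Kripke.labels (K : Kripke AP S) (ρ : List S) : List (Set AP) :=
  ρ.map K.μ

/-- Star-concatenation `w ⋆ w'`: `w` with its last symbol removed, followed by `w'`. -/
def starCat (w w' : List S) : List S := w.dropLast ++ w'

/-- `ν` is a (nonempty) proper prefix of `ρ`. -/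
def ProperPref (ν ρ : List S) : Prop :=
  ν ≠ [] ∧ ν <+: ρ ∧ ν.length < ρ.length

/-- `ν` is a (nonempty) proper suffix of `ρ`. -/
def ProperSuff (ν ρ : List S) : Prop :=
  ν ≠ [] ∧ ν <:+ ρ ∧ ν.length < ρ.length

/-- The summary of a trace `ρ` w.r.t. the canonical NFAs `A ℓ` of the regular expressions of
`spec`: the triple `(fst ρ, Π, lst ρ)` where `Π` collects the pairs `(q, q')` of states of some
automaton `A ℓ` such that there is a run of `A ℓ` from `q` to `q'` over `μ(ρ)`. -/
def Summary [Inhabited S] (K : Kripke AP S) (A : ∀ ℓ : ι, NFA (Set AP) (Q ℓ))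
    (ρ : List S) : S × Set (Σ ℓ : ι, Q ℓ × Q ℓ) × S :=
  (ρ.headI, {p | p.2.2 ∈ (A p.1).evalFrom {p.2.1} (K.labels ρ)}, ρ.getLastI)

/-- `h`-prefix bisimilarity of traces w.r.t. `spec` (given by the canonical NFAs `A`). -/
def PrefixBisim [Inhabited S] (K : Kripke AP S) (A : ∀ ℓ : ι, NFA (Set AP) (Q ℓ)) :
    ℕ → List S → List S → Prop
  | 0, ρ, ρ' => Summary K A ρ = Summary K A ρ'
  | h + 1, ρ, ρ' => Summary K A ρ = Summary K A ρ' ∧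
      (∀ ν, ProperPref ν ρ → ∃ ν', ProperPref ν' ρ' ∧ PrefixBisim K A h ν ν') ∧
      (∀ ν', ProperPref ν' ρ' → ∃ ν, ProperPref ν ρ ∧ PrefixBisim K A h ν ν')

/-- The six (primitive) HS modalities used in the paper. -/
inductive HSMod where
  | A | Abar | B | Bbar | E | Ebar
  deriving DecidableEq

/-- HS formulas whose atomic formulas are indexed by `ι` (regular expressions of `spec`). -/
inductive HS (ι : Type) where
  | atom (ℓ : ι)
  | neg (φ : HS ι)
  | and (φ ψ : HS ι)
  | or (φ ψ : HS ι)
  | dia (X : HSMod) (φ : HS ι)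
  | box (X : HSMod) (φ : HS ι)

/-- State-based satisfaction relation `K, ρ ⊨ φ`, where atom `ℓ` denotes the language `L ℓ`. -/
def HS.sat [Inhabited S] (K : Kripke AP S) (L : ι → Language (Set AP)) :
    HS ι → List S → Prop
  | atom ℓ, ρ => K.labels ρ ∈ L ℓ
  | neg φ, ρ => ¬ φ.sat K L ρ
  | and φ ψ, ρ => φ.sat K L ρ ∧ ψ.sat K L ρ
  | or φ ψ, ρ => φ.sat K L ρ ∨ ψ.sat K L ρ
  | dia HSMod.B φ, ρ => ∃ ν, ProperPref ν ρ ∧ φ.sat K L ν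
  | box HSMod.B φ, ρ => ∀ ν, ProperPref ν ρ → φ.sat K L ν
  | dia HSMod.E φ, ρ => ∃ ν, ProperSuff ν ρ ∧ φ.sat K L ν
  | box HSMod.E φ, ρ => ∀ ν, ProperSuff ν ρ → φ.sat K L ν
  | dia HSMod.Bbar φ, ρ => ∃ ρ', K.IsTrace ρ' ∧ ProperPref ρ ρ' ∧ φ.sat K L ρ'
  | box HSMod.Bbar φ, ρ => ∀ ρ', K.IsTrace ρ' → ProperPref ρ ρ' → φ.sat K L ρ'
  | dia HSMod.Ebar φ, ρ => ∃ ρ', K.IsTrace ρ' ∧ ProperSuff ρ ρ' ∧ φ.sat K L ρ'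
  | box HSMod.Ebar φ, ρ => ∀ ρ', K.IsTrace ρ' → ProperSuff ρ ρ' → φ.sat K L ρ'
  | dia HSMod.A φ, ρ => ∃ ρ', K.IsTrace ρ' ∧ ρ'.headI = ρ.getLastI ∧ φ.sat K L ρ'
  | box HSMod.A φ, ρ => ∀ ρ', K.IsTrace ρ' → ρ'.headI = ρ.getLastI → φ.sat K L ρ'
  | dia HSMod.Abar φ, ρ => ∃ ρ', K.IsTrace ρ' ∧ ρ'.getLastI = ρ.headI ∧ φ.sat K L ρ'
  | box HSMod.Abar φ, ρ => ∀ ρ', K.IsTrace ρ' → ρ'.getLastI = ρ.headI → φ.sat K L ρ'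

/-- Nesting depth of the modality `⟨B⟩` (and `[B]`). -/
def HS.depthB : HS ι → ℕ
  | atom _ => 0
  | neg φ => φ.depthB
  | and φ ψ => max φ.depthB ψ.depthB
  | or φ ψ => max φ.depthB ψ.depthB
  | dia HSMod.B φ => φ.depthB + 1
  | box HSMod.B φ => φ.depthB + 1
  | dia _ φ => φ.depthB
  | box _ φ => φ.depthB

/-- Positive normal form: negation is applied only to atomic formulas. -/
def HS.IsPNF : HS ι → Prop
  | atom _ => True
  | neg (atom _) => True
  | neg _ => False
  | and φ ψ => φ.IsPNF ∧ ψ.IsPNF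
  | or φ ψ => φ.IsPNF ∧ ψ.IsPNF
  | dia _ φ => φ.IsPNF
  | box _ φ => φ.IsPNF

/-- Membership in the fragment `AĀBB̄Ē`: no occurrence of `⟨E⟩`/`[E]`. -/
def HS.NoE : HS ι → Prop
  | atom _ => True
  | neg φ => φ.NoE
  | and φ ψ => φ.NoE ∧ ψ.NoE
  | or φ ψ => φ.NoE ∧ ψ.NoE
  | dia HSMod.E _ => False
  | box HSMod.E _ => False
  | dia _ φ => φ.NoE
  | box _ φ => φ.NoE

/-- Size of an HS formula. -/
def HS.size : HS ι → ℕ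
  | atom _ => 1
  | neg φ => φ.size + 1
  | and φ ψ => φ.size + ψ.size + 1
  | or φ ψ => φ.size + ψ.size + 1
  | dia _ φ => φ.size + 1
  | box _ φ => φ.size + 1

/-- The prefix-skeleton sampling of `ρ` in the interval `[i, j]` of (1-based) `ρ`-positions:
`{i, j}` together with the minimal positions in `[i+1, j-1]` realizing each prefix summary. -/
def Skel [Inhabited S] (K : Kripke AP S) (A : ∀ ℓ : ι, NFA (Set AP) (Q ℓ))
    (ρ : List S) (i j : ℕ) : Set ℕ :=
  {i, j} ∪ {k' | k' ∈ Set.Icc (i + 1) (j - 1) ∧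
      ∀ k ∈ Set.Icc (i + 1) (j - 1),
        Summary K A (ρ.take k) = Summary K A (ρ.take k') → k' ≤ k}

/-- The `h`-prefix sampling `PS_h` of a trace `ρ` (positions are 1-based). -/
def PS [Inhabited S] (K : Kripke AP S) (A : ∀ ℓ : ι, NFA (Set AP) (Q ℓ))
    (ρ : List S) : ℕ → Set ℕ
  | 0 => {1, ρ.length}
  | h + 1 => PS K A ρ h ∪ {k | ∃ i ∈ PS K A ρ h, ∃ j ∈ PS K A ρ h, i < j ∧
      (∀ m ∈ PS K A ρ h, m ≤ i ∨ j ≤ m) ∧ k ∈ Skel K A ρ i j}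

/-- The `h`-sampling word of `ρ`: the sequence of prefix summaries at the positions of `PS_h`,
listed in increasing order. -/
noncomputable def samplingWord [Inhabited S] (K : Kripke AP S)
    (A : ∀ ℓ : ι, NFA (Set AP) (Q ℓ)) (ρ : List S) (h : ℕ) :
    List (S × Set (Σ ℓ : ι, Q ℓ × Q ℓ) × S) :=
  ((List.range (ρ.length + 1)).filter
      (fun i => @decide (i ∈ PS K A ρ h) (Classical.propDecidable _))).map
    (fun i => Summary K A (ρ.take i))

/-- `π` is a trace induced by `ρ`: `π` is obtained by selecting a strictly increasing sequence
of `ρ`-positions starting at the first and ending at the last position, and `π` is a trace. -/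
def InducedTrace [Inhabited S] (K : Kripke AP S) (ρ π : List S) : Prop :=
  K.IsTrace π ∧ ∃ is : List ℕ, is.Chain' (· < ·) ∧ is.head? = some 0 ∧
    is.getLast? = some (ρ.length - 1) ∧ π = is.map (fun i => ρ.getD i default)

/-- Propositional formulas over `AP`. -/
inductive PropForm (AP : Type) where
  | tru
  | var (p : AP)
  | not (φ : PropForm AP)
  | and (φ ψ : PropForm AP)

/-- Satisfaction of a propositional formula by a letter `A ∈ 2^AP`. -/
def PropForm.Sat : PropForm AP → Set AP → Prop
  | tru, _ => True
  | var p, a => p ∈ a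
  | not φ, a => ¬ φ.Sat a
  | and φ ψ, a => φ.Sat a ∧ ψ.Sat a

/-- Propositional-based regular expressions over `AP`. -/
inductive PRE (AP : Type) where
  | eps
  | atom (φ : PropForm AP)
  | union (r s : PRE AP)
  | cat (r s : PRE AP)
  | star (r : PRE AP)

/-- The size of a regular expression: its number of subexpressions. -/
def PRE.size : PRE AP → ℕ
  | eps => 1
  | atom _ => 1
  | union r s => r.size + s.size + 1
  | cat r s => r.size + s.size + 1
  | star r => r.size + 1

/-- The language of finite words over `2^AP` denoted by a regular expression. -/
def PRE.lang : PRE AP → Language (Set AP)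
  | eps => 1
  | atom φ => {w | ∃ a, φ.Sat a ∧ w = [a]}
  | union r s => r.lang + s.lang
  | cat r s => r.lang * s.lang
  | star r => KStar.kstar r.lang


lemma myEvalFrom_append {α σ : Type*} (M : NFA α σ) (S : Set σ) (u v : List α) :
    M.evalFrom S (u ++ v) = M.evalFrom (M.evalFrom S u) v :=
  List.foldl_append

lemma myMem_evalFrom_iff {α σ : Type*} (M : NFA α σ) :
    ∀ (v : List α) (S : Set σ) (x : σ),
      x ∈ M.evalFrom S v ↔ ∃ q ∈ S, x ∈ M.evalFrom {q} v := by
  intro v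
  induction v with
  | nil => intro S x; simp [NFA.evalFrom]
  | cons a v ih =>
    intro S x
    have h1 : M.evalFrom S (a :: v) = M.evalFrom (M.stepSet S a) v := rfl
    have h2 : ∀ q : σ, M.evalFrom {q} (a :: v) = M.evalFrom (M.stepSet {q} a) v :=
      fun q => rfl
    rw [h1, ih]
    constructor
    · rintro ⟨m, hm, hx⟩
      rw [NFA.mem_stepSet] at hm
      obtain ⟨q, hq, hmq⟩ := hm
      refine ⟨q, hq, ?_⟩
      rw [h2, ih]
      exact ⟨m, by simp [NFA.mem_stepSet, hmq], hx⟩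
    · rintro ⟨q, hq, hx⟩
      rw [h2, ih] at hx
      obtain ⟨m, hm, hx⟩ := hx
      rw [NFA.mem_stepSet] at hm
      obtain ⟨q', hq', hm'⟩ := hm
      simp only [Set.mem_singleton_iff] at hq'
      rw [hq'] at hm'
      exact ⟨m, by rw [NFA.mem_stepSet]; exact ⟨q, hq, hm'⟩, hx⟩

lemma myGetLastI_append {α : Type*} [Inhabited α] (u v : List α) (hv : v ≠ []) :
    (u ++ v).getLastI = v.getLastI := by
  rw [List.getLastI_eq_getLast?, List.getLastI_eq_getLast?, List.getLast?_append]
  obtain ⟨x, hx⟩ := Option.isSome_iff_exists.mp (List.getLast?_isSome.mpr hv)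
  simp [hx]

lemma myHeadI_append {α : Type*} [Inhabited α] (u v : List α) (hu : u ≠ []) :
    (u ++ v).headI = u.headI := by
  cases u with
  | nil => exact absurd rfl hu
  | cons a l => rfl

/-- equal summaries are preserved under left and right star-concatenation. -/
theorem stmt1 [Inhabited S] (K : Kripke AP S) (A : ∀ ℓ : ι, NFA (Set AP) (Q ℓ))
    (ρ ρ' : List S) (hρ : K.IsTrace ρ) (hρ' : K.IsTrace ρ')
    (hsum : Summary K A ρ = Summary K A ρ') :
    (∀ ρL, K.IsTrace ρL → ρL.getLastI = ρ.headI → ρL.getLastI = ρ'.headI →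
        Summary K A (starCat ρL ρ) = Summary K A (starCat ρL ρ')) ∧
    (∀ ρR, K.IsTrace ρR → ρ.getLastI = ρR.headI → ρ'.getLastI = ρR.headI →
        Summary K A (starCat ρ ρR) = Summary K A (starCat ρ' ρR)) := by
  obtain ⟨hne, -⟩ := hρ
  obtain ⟨hne', -⟩ := hρ'
  have hHead : ρ.headI = ρ'.headI := congrArg Prod.fst hsum
  have hLast : ρ.getLastI = ρ'.getLastI := congrArg (fun t => t.2.2) hsum
  have hPi : ∀ (ℓ : ι) (q q' : Q ℓ),
      q' ∈ (A ℓ).evalFrom {q} (ρ.map K.μ) ↔ q' ∈ (A ℓ).evalFrom {q} (ρ'.map K.μ) := by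
    intro ℓ q q'
    have h2 := congrArg (fun t => t.2.1) hsum
    simp only [Summary] at h2
    exact Set.ext_iff.mp h2 ⟨ℓ, q, q'⟩
  have hPiSet : ∀ (ℓ : ι) (q : Q ℓ),
      (A ℓ).evalFrom {q} (ρ.map K.μ) = (A ℓ).evalFrom {q} (ρ'.map K.μ) :=
    fun ℓ q => Set.ext fun x => hPi ℓ q x
  have midEq : ∀ u : List S,
      {p : Σ ℓ : ι, Q ℓ × Q ℓ | p.2.2 ∈ (A p.1).evalFrom {p.2.1} (K.labels (u ++ ρ))} =
      {p : Σ ℓ : ι, Q ℓ × Q ℓ | p.2.2 ∈ (A p.1).evalFrom {p.2.1} (K.labels (u ++ ρ'))} := by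
    intro u
    ext ⟨ℓ, q, q'⟩
    simp only [Set.mem_setOf_eq, Kripke.labels, List.map_append, myEvalFrom_append]
    rw [myMem_evalFrom_iff (A ℓ) (ρ.map K.μ), myMem_evalFrom_iff (A ℓ) (ρ'.map K.μ)]
    exact exists_congr fun m => and_congr_right fun _ => hPi ℓ m q'
  have midEq' : ∀ v : List S,
      {p : Σ ℓ : ι, Q ℓ × Q ℓ | p.2.2 ∈ (A p.1).evalFrom {p.2.1} (K.labels (ρ ++ v))} =
      {p : Σ ℓ : ι, Q ℓ × Q ℓ | p.2.2 ∈ (A p.1).evalFrom {p.2.1} (K.labels (ρ' ++ v))} := by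
    intro v
    ext ⟨ℓ, q, q'⟩
    simp only [Set.mem_setOf_eq, Kripke.labels, List.map_append, myEvalFrom_append]
    rw [hPiSet ℓ q]
  constructor
  · intro ρL hρL h1 h2
    unfold starCat Summary
    have e1 : (ρL.dropLast ++ ρ).headI = (ρL.dropLast ++ ρ').headI := by
      cases hd : ρL.dropLast with
      | nil => simpa using hHead
      | cons a l => rfl
    have e3 : (ρL.dropLast ++ ρ).getLastI = (ρL.dropLast ++ ρ').getLastI := by
      rw [myGetLastI_append _ _ hne, myGetLastI_append _ _ hne']
      exact hLast
    rw [e1, e3, midEq ρL.dropLast]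
  · intro ρR hρR h1 h2
    obtain ⟨r, rs, rfl⟩ := List.exists_cons_of_ne_nil hρR.1
    have hr : (r :: rs).headI = r := rfl
    have key : ∀ (σ : List S) (hσ : σ ≠ []), σ.getLastI = r →
        starCat σ (r :: rs) = σ ++ rs := by
      intro σ hσ hσr
      show σ.dropLast ++ r :: rs = σ ++ rs
      have : σ.dropLast ++ r :: rs = (σ.dropLast ++ [r]) ++ rs := by simp
      rw [this, ← hσr, List.getLastI_eq_getLast?, List.getLast?_eq_getLast hσ,
        Option.getD_some, List.dropLast_append_getLast hσ]
    rw [key ρ hne (h1.trans hr), key ρ' hne' (h2.trans hr)]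
    unfold Summary
    have e1 : (ρ ++ rs).headI = (ρ' ++ rs).headI := by
      rw [myHeadI_append _ _ hne, myHeadI_append _ _ hne']; exact hHead
    have e3 : (ρ ++ rs).getLastI = (ρ' ++ rs).getLastI := by
      cases rs with
      | nil => simpa using hLast
      | cons b bs =>
        rw [myGetLastI_append _ _ (by simp), myGetLastI_append _ _ (by simp)]
    rw [e1, e3, midEq' rs]
end

section
/- For all h ≥ 0, if traces ρ and ρ' are h-prefix bisimilar, then for every trace ρ_R with fst(ρ_R) = lst(ρ) = lst(ρ'), the traces ρ ⋆ ρ_R and ρ' ⋆ ρ_R are h-prefix bisimilar (right star-concatenation preserves h-prefix bisimilarity). -/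
variable {AP S : Type} {ι : Type} {Q : ι → Type}

section Stmt3Aux

lemma stmt3_evalFrom_cons {α σ : Type} (M : NFA α σ) (T : Set σ) (a : α) (w : List α) :
    M.evalFrom T (a :: w) = M.evalFrom (M.stepSet T a) w := rfl

lemma stmt3_evalFrom_append' {α σ : Type} (M : NFA α σ) (T : Set σ) (x y : List α) :
    M.evalFrom T (x ++ y) = M.evalFrom (M.evalFrom T x) y := by
  simp [NFA.evalFrom, List.foldl_append]

lemma stmt3_mem_evalFrom_iff {α σ : Type} (M : NFA α σ) (T : Set σ) (w : List α) (q : σ) :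
    q ∈ M.evalFrom T w ↔ ∃ s ∈ T, q ∈ M.evalFrom {s} w := by
  induction w generalizing T with
  | nil => simp [NFA.evalFrom]
  | cons a w ih =>
    rw [stmt3_evalFrom_cons, ih]
    constructor
    · rintro ⟨s, hs, hq⟩
      rw [NFA.mem_stepSet] at hs
      obtain ⟨t, ht, hst⟩ := hs
      refine ⟨t, ht, ?_⟩
      rw [stmt3_evalFrom_cons, ih]
      exact ⟨s, by rw [NFA.mem_stepSet]; exact ⟨t, rfl, hst⟩, hq⟩
    · rintro ⟨t, ht, hq⟩
      rw [stmt3_evalFrom_cons, ih] at hq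
      obtain ⟨s, hs, hq⟩ := hq
      rw [NFA.mem_stepSet] at hs
      obtain ⟨t', ht', hst⟩ := hs
      rw [Set.mem_singleton_iff] at ht'
      subst ht'
      exact ⟨s, by rw [NFA.mem_stepSet]; exact ⟨t', ht, hst⟩, hq⟩

lemma stmt3_summary_append [Inhabited S] (K : Kripke AP S) (A : ∀ ℓ : ι, NFA (Set AP) (Q ℓ))
    (ρ ρ' w : List S) (hρ : ρ ≠ []) (hρ' : ρ' ≠ []) (h : Summary K A ρ = Summary K A ρ') :
    Summary K A (ρ ++ w) = Summary K A (ρ' ++ w) := by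
  have hh : ρ.headI = ρ'.headI := congrArg Prod.fst h
  have hl : ρ.getLastI = ρ'.getLastI := congrArg (fun p => p.2.2) h
  have hset : ∀ p : (Σ ℓ : ι, Q ℓ × Q ℓ),
      p.2.2 ∈ (A p.1).evalFrom {p.2.1} (K.labels ρ) ↔
      p.2.2 ∈ (A p.1).evalFrom {p.2.1} (K.labels ρ') := by
    intro p
    have h2 : ({p | p.2.2 ∈ (A p.1).evalFrom {p.2.1} (K.labels ρ)} :
        Set (Σ ℓ : ι, Q ℓ × Q ℓ)) = {p | p.2.2 ∈ (A p.1).evalFrom {p.2.1} (K.labels ρ')} :=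
      congrArg (fun p => p.2.1) h
    rw [Set.ext_iff] at h2
    exact h2 p
  have hlab : ∀ (u v : List S), K.labels (u ++ v) = K.labels u ++ K.labels v := by
    intro u v; simp [Kripke.labels]
  unfold Summary
  refine Prod.ext ?_ (Prod.ext ?_ ?_)
  · obtain ⟨a, t, rfl⟩ := List.exists_cons_of_ne_nil hρ
    obtain ⟨a', t', rfl⟩ := List.exists_cons_of_ne_nil hρ'
    simpa using hh
  · show ({p | p.2.2 ∈ (A p.1).evalFrom {p.2.1} (K.labels (ρ ++ w))} :
        Set (Σ ℓ : ι, Q ℓ × Q ℓ)) = _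
    ext p
    simp only [Set.mem_setOf_eq, hlab, stmt3_evalFrom_append']
    rw [stmt3_mem_evalFrom_iff, stmt3_mem_evalFrom_iff (A p.1) ((A p.1).evalFrom {p.2.1} (K.labels ρ'))]
    constructor
    · rintro ⟨s, hs, hq⟩
      exact ⟨s, (hset ⟨p.1, p.2.1, s⟩).mp hs, hq⟩
    · rintro ⟨s, hs, hq⟩
      exact ⟨s, (hset ⟨p.1, p.2.1, s⟩).mpr hs, hq⟩
  · show (ρ ++ w).getLastI = (ρ' ++ w).getLastI
    cases w with
    | nil => simpa using hl
    | cons b u =>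
      rw [List.getLastI_eq_getLast?, List.getLastI_eq_getLast?,
        List.getLast?_append_of_ne_nil _ (by simp : (b :: u) ≠ []),
        List.getLast?_append_of_ne_nil _ (by simp : (b :: u) ≠ [])]

lemma stmt3_bisim_symm [Inhabited S] (K : Kripke AP S) (A : ∀ ℓ : ι, NFA (Set AP) (Q ℓ)) :
    ∀ (h : ℕ) (ρ ρ' : List S), PrefixBisim K A h ρ ρ' → PrefixBisim K A h ρ' ρ := by
  intro h
  induction h with
  | zero => exact fun ρ ρ' hb => hb.symm
  | succ h ih =>
    rintro ρ ρ' ⟨hs, hf, hg⟩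
    exact ⟨hs.symm,
      fun ν' hν' => let ⟨ν, hν, hb⟩ := hg ν' hν'; ⟨ν, hν, ih _ _ hb⟩,
      fun ν hν => let ⟨ν', hν', hb⟩ := hf ν hν; ⟨ν', hν', ih _ _ hb⟩⟩

lemma stmt3_bisim_mono [Inhabited S] (K : Kripke AP S) (A : ∀ ℓ : ι, NFA (Set AP) (Q ℓ)) :
    ∀ (h : ℕ) (ρ ρ' : List S), PrefixBisim K A (h + 1) ρ ρ' → PrefixBisim K A h ρ ρ' := by
  intro h
  induction h with
  | zero => exact fun ρ ρ' hb => hb.1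
  | succ h ih =>
    rintro ρ ρ' ⟨hs, hf, hg⟩
    exact ⟨hs,
      fun ν hν => let ⟨ν', hν', hb⟩ := hf ν hν; ⟨ν', hν', ih _ _ hb⟩,
      fun ν' hν' => let ⟨ν, hν, hb⟩ := hg ν' hν'; ⟨ν, hν, ih _ _ hb⟩⟩

lemma stmt3_bisim_append [Inhabited S] (K : Kripke AP S) (A : ∀ ℓ : ι, NFA (Set AP) (Q ℓ)) :
    ∀ (h : ℕ) (ρ ρ' w : List S), ρ ≠ [] → ρ' ≠ [] → PrefixBisim K A h ρ ρ' →
      PrefixBisim K A h (ρ ++ w) (ρ' ++ w) := by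
  intro h
  induction h with
  | zero =>
    intro ρ ρ' w hρ hρ' hb
    exact stmt3_summary_append K A ρ ρ' w hρ hρ' hb
  | succ h ih =>
    have key : ∀ (ρ ρ' w : List S), ρ ≠ [] → ρ' ≠ [] → PrefixBisim K A (h + 1) ρ ρ' →
        ∀ ν, ProperPref ν (ρ ++ w) → ∃ ν', ProperPref ν' (ρ' ++ w) ∧ PrefixBisim K A h ν ν' := by
      rintro ρ ρ' w hρ hρ' hb ν ⟨hν0, hνp, hνl⟩
      rcases lt_trichotomy ν.length ρ.length with hlt | heq | hgt
      · have hνρ : ν <+: ρ :=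
          List.prefix_of_prefix_length_le hνp (List.prefix_append ρ w) (le_of_lt hlt)
        obtain ⟨ν', hν', hb'⟩ := hb.2.1 ν ⟨hν0, hνρ, hlt⟩
        refine ⟨ν', ⟨hν'.1, hν'.2.1.trans (List.prefix_append ρ' w), ?_⟩, hb'⟩
        calc ν'.length < ρ'.length := hν'.2.2
          _ ≤ (ρ' ++ w).length := by simp
      · have hνρ : ν = ρ :=
          (List.prefix_of_prefix_length_le hνp (List.prefix_append ρ w) (le_of_eq heq)).eq_of_length heq
        subst hνρ
        have hw : w ≠ [] := by
          intro hnil; subst hnil; simp at hνl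
        refine ⟨ρ', ⟨hρ', List.prefix_append ρ' w, ?_⟩, stmt3_bisim_mono K A h ν ρ' hb⟩
        have : 0 < w.length := List.length_pos_iff.mpr hw
        simp; omega
      · set k := ν.length - ρ.length with hk
        have hνlen : ν.length = ρ.length + k := by omega
        have hν_eq : ν = ρ ++ w.take k := by
          have := List.prefix_iff_eq_take.mp hνp
          rw [hνlen] at this
          simpa [List.take_append, List.take_of_length_le (l := ρ) (by omega : ρ.length ≤ ρ.length + k)] using this
        have hkw : k < w.length := by
          simp at hνl; omega
        refine ⟨ρ' ++ w.take k, ⟨by simp [hρ'], ⟨w.drop k, by simp⟩, ?_⟩, ?_⟩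
        · simp [min_eq_left (le_of_lt hkw)]; omega
        · rw [hν_eq]
          exact ih ρ ρ' (w.take k) hρ hρ' (stmt3_bisim_mono K A h ρ ρ' hb)
    intro ρ ρ' w hρ hρ' hb
    refine ⟨stmt3_summary_append K A ρ ρ' w hρ hρ' hb.1, key ρ ρ' w hρ hρ' hb, ?_⟩
    intro ν' hν'
    obtain ⟨ν, hν, hb'⟩ := key ρ' ρ w hρ' hρ (stmt3_bisim_symm K A _ ρ ρ' hb) ν' hν'
    exact ⟨ν, hν, stmt3_bisim_symm K A h ν' ν hb'⟩

lemma stmt3_starCat_eq [Inhabited S] (ρ ρR : List S) (hρ : ρ ≠ []) (hρR : ρR ≠ [])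
    (h1 : ρR.headI = ρ.getLastI) : starCat ρ ρR = ρ ++ ρR.tail := by
  obtain ⟨a, t, rfl⟩ := List.exists_cons_of_ne_nil hρR
  have ha : a = ρ.getLast hρ := by
    rw [List.getLastI_eq_getLast?, List.getLast?_eq_getLast hρ] at h1
    simpa using h1
  show ρ.dropLast ++ (a :: t) = ρ ++ t
  rw [ha, show ρ.dropLast ++ (ρ.getLast hρ :: t) = (ρ.dropLast ++ [ρ.getLast hρ]) ++ t by simp,
    List.dropLast_append_getLast hρ]

end Stmt3Aux

/-- right star-concatenation preserves `h`-prefix bisimilarity. -/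
theorem stmt3 [Inhabited S] (K : Kripke AP S) (A : ∀ ℓ : ι, NFA (Set AP) (Q ℓ))
    (h : ℕ) (ρ ρ' ρR : List S)
    (hρ : K.IsTrace ρ) (hρ' : K.IsTrace ρ') (hρR : K.IsTrace ρR)
    (hbis : PrefixBisim K A h ρ ρ')
    (h1 : ρR.headI = ρ.getLastI) (h2 : ρR.headI = ρ'.getLastI) :
    PrefixBisim K A h (starCat ρ ρR) (starCat ρ' ρR) := by
  have hρR' : ρR ≠ [] := hρR.1
  rw [stmt3_starCat_eq ρ ρR hρ.1 hρR' h1, stmt3_starCat_eq ρ' ρR hρ'.1 hρR' h2]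
  exact stmt3_bisim_append K A h ρ ρ' ρR.tail hρ.1 hρ'.1 hbis
end

section
/- For all h ≥ 0, if traces ρ and ρ' are h-prefix bisimilar, then for every trace ρ_L with lst(ρ_L) = fst(ρ) = fst(ρ'), the traces ρ_L ⋆ ρ and ρ_L ⋆ ρ' are h-prefix bisimilar (left star-concatenation preserves h-prefix bisimilarity). -/
variable {AP S : Type} {ι : Type} {Q : ι → Type}

section AuxNFA
variable {α σ : Type*}

lemma evalFrom_iUnion' {ι' : Type*} (M : NFA α σ) (w : List α) :
    ∀ T : ι' → Set σ, M.evalFrom (⋃ i, T i) w = ⋃ i, M.evalFrom (T i) w := by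
  induction w with
  | nil => intro T; simp [NFA.evalFrom]
  | cons a w ih =>
    intro T
    have hstep : M.stepSet (⋃ i, T i) a = ⋃ i, M.stepSet (T i) a := by
      ext x; simp only [NFA.mem_stepSet, Set.mem_iUnion]; tauto
    show M.evalFrom (M.stepSet (⋃ i, T i) a) w = _
    rw [hstep, ih]
    rfl

lemma evalFrom_singletons' (M : NFA α σ) (w : List α) (T : Set σ) :
    M.evalFrom T w = ⋃ q ∈ T, M.evalFrom {q} w := by
  have h := evalFrom_iUnion' M w (fun q : T => ({(q : σ)} : Set σ))
  rw [Set.iUnion_of_singleton_coe] at h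
  rw [h, Set.biUnion_eq_iUnion]

lemma evalFrom_congr' (M : NFA α σ) (w w' : List α)
    (h : ∀ q : σ, M.evalFrom {q} w = M.evalFrom {q} w') (T : Set σ) :
    M.evalFrom T w = M.evalFrom T w' := by
  rw [evalFrom_singletons', evalFrom_singletons']
  exact Set.iUnion₂_congr fun q _ => h q

lemma evalFrom_append' (M : NFA α σ) (T : Set σ) (u v : List α) :
    M.evalFrom T (u ++ v) = M.evalFrom (M.evalFrom T u) v :=
  List.foldl_append

end AuxNFA

lemma getLastI_append' [Inhabited S] {l ρ : List S} (hρ : ρ ≠ []) :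
    (l ++ ρ).getLastI = ρ.getLastI := by
  rw [List.getLastI_eq_getLast?, List.getLastI_eq_getLast?, List.getLast?_append]
  cases hx : ρ.getLast? with
  | none => exact absurd (List.getLast?_eq_none_iff.mp hx) hρ
  | some x => simp

lemma headI_prefix' [Inhabited S] {ν ρ : List S} (h : ν <+: ρ) (hν : ν ≠ []) :
    ν.headI = ρ.headI := by
  obtain ⟨t, rfl⟩ := h
  cases ν with
  | nil => exact absurd rfl hν
  | cons a l => rfl

lemma summary_starCat [Inhabited S] (K : Kripke AP S) (A : ∀ ℓ : ι, NFA (Set AP) (Q ℓ))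
    (ρ ρ' ρL : List S) (hρ : ρ ≠ []) (hρ' : ρ' ≠ [])
    (hsum : Summary K A ρ = Summary K A ρ')
    (h1 : ρL.getLastI = ρ.headI) (h2 : ρL.getLastI = ρ'.headI) :
    Summary K A (starCat ρL ρ) = Summary K A (starCat ρL ρ') := by
  have hfst : ρ.headI = ρ'.headI := congrArg Prod.fst hsum
  have hset : ∀ (ℓ : ι) (q : Q ℓ),
      (A ℓ).evalFrom {q} (K.labels ρ) = (A ℓ).evalFrom {q} (K.labels ρ') := by
    intro ℓ q; ext q'
    exact Set.ext_iff.mp (congrArg (fun x => x.2.1) hsum) ⟨ℓ, q, q'⟩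
  have e1 : (starCat ρL ρ).headI = (starCat ρL ρ').headI := by
    cases h : ρL.dropLast with
    | nil => simpa [starCat, h] using hfst
    | cons a t => simp [starCat, h]
  have e3 : (starCat ρL ρ).getLastI = (starCat ρL ρ').getLastI := by
    have hl : ρ.getLastI = ρ'.getLastI := congrArg (fun x => x.2.2) hsum
    rw [show starCat ρL ρ = ρL.dropLast ++ ρ from rfl,
      show starCat ρL ρ' = ρL.dropLast ++ ρ' from rfl,
      getLastI_append' hρ, getLastI_append' hρ', hl]
  have e2 : {p : Σ ℓ : ι, Q ℓ × Q ℓ |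
        p.2.2 ∈ (A p.1).evalFrom {p.2.1} (K.labels (starCat ρL ρ))} =
      {p : Σ ℓ : ι, Q ℓ × Q ℓ |
        p.2.2 ∈ (A p.1).evalFrom {p.2.1} (K.labels (starCat ρL ρ'))} := by
    ext p
    obtain ⟨ℓ, q, q'⟩ := p
    simp only [Set.mem_setOf_eq]
    have hw : K.labels (starCat ρL ρ) = K.labels ρL.dropLast ++ K.labels ρ :=
      List.map_append
    have hw' : K.labels (starCat ρL ρ') = K.labels ρL.dropLast ++ K.labels ρ' :=
      List.map_append
    rw [hw, hw', evalFrom_append', evalFrom_append',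
      evalFrom_congr' (A ℓ) _ _ (hset ℓ)]
  show ((starCat ρL ρ).headI, _, (starCat ρL ρ).getLastI) =
    ((starCat ρL ρ').headI, _, (starCat ρL ρ').getLastI)
  rw [e1, e2, e3]

lemma bisim_refl [Inhabited S] (K : Kripke AP S) (A : ∀ ℓ : ι, NFA (Set AP) (Q ℓ)) :
    ∀ (h : ℕ) (ρ : List S), PrefixBisim K A h ρ ρ
  | 0, _ => rfl
  | h + 1, ρ => ⟨rfl, fun ν hν => ⟨ν, hν, bisim_refl K A h ν⟩,
      fun ν hν => ⟨ν, hν, bisim_refl K A h ν⟩⟩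

lemma stmt4_aux [Inhabited S] (K : Kripke AP S) (A : ∀ ℓ : ι, NFA (Set AP) (Q ℓ)) :
    ∀ (h : ℕ) (ρ ρ' ρL : List S), ρ ≠ [] → ρ' ≠ [] →
      PrefixBisim K A h ρ ρ' →
      ρL.getLastI = ρ.headI → ρL.getLastI = ρ'.headI →
      PrefixBisim K A h (starCat ρL ρ) (starCat ρL ρ') := by
  intro h
  induction h with
  | zero =>
    intro ρ ρ' ρL hρ hρ' hbis h1 h2
    exact summary_starCat K A ρ ρ' ρL hρ hρ' hbis h1 h2
  | succ h ih =>
    intro ρ ρ' ρL hρ hρ' hbis h1 h2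
    obtain ⟨hsum, hfw, hbw⟩ := hbis
    refine ⟨summary_starCat K A ρ ρ' ρL hρ hρ' hsum h1 h2, ?_, ?_⟩
    · rintro ν ⟨hne, hpre, hlen⟩
      set L := ρL.dropLast with hL
      by_cases hc : ν.length ≤ L.length
      · have hνL : ν <+: L :=
          List.prefix_of_prefix_length_le hpre (List.prefix_append L ρ) hc
        refine ⟨ν, ⟨hne, hνL.trans (List.prefix_append L ρ'), ?_⟩, bisim_refl K A h ν⟩
        have := List.length_pos_iff.mpr hρ'
        show ν.length < (L ++ ρ').length
        rw [List.length_append]; omega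
      · push_neg at hc
        have hLν : L <+: ν :=
          List.prefix_of_prefix_length_le (List.prefix_append L ρ) hpre hc.le
        obtain ⟨ν₀, rfl⟩ := hLν
        have hν₀ne : ν₀ ≠ [] := by
          rintro rfl; simp at hc
        have hν₀pre : ν₀ <+: ρ := (List.prefix_append_right_inj L).mp hpre
        have hν₀len : ν₀.length < ρ.length := by
          have : (L ++ ν₀).length < (L ++ ρ).length := hlen
          rw [List.length_append, List.length_append] at this; omega
        obtain ⟨ν₀', hP', hb⟩ := hfw ν₀ ⟨hν₀ne, hν₀pre, hν₀len⟩
        have hh1 : ρL.getLastI = ν₀.headI := by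
          rw [h1, headI_prefix' hν₀pre hν₀ne]
        have hh2 : ρL.getLastI = ν₀'.headI := by
          rw [h2, headI_prefix' hP'.2.1 hP'.1]
        have hbig := ih ν₀ ν₀' ρL hν₀ne hP'.1 hb hh1 hh2
        refine ⟨L ++ ν₀', ⟨?_, ?_, ?_⟩, hbig⟩
        · simp [hP'.1]
        · exact (List.prefix_append_right_inj L).mpr hP'.2.1
        · show (L ++ ν₀').length < (L ++ ρ').length
          rw [List.length_append, List.length_append]
          exact Nat.add_lt_add_left hP'.2.2 _
    · rintro ν ⟨hne, hpre, hlen⟩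
      set L := ρL.dropLast with hL
      by_cases hc : ν.length ≤ L.length
      · have hνL : ν <+: L :=
          List.prefix_of_prefix_length_le hpre (List.prefix_append L ρ') hc
        refine ⟨ν, ⟨hne, hνL.trans (List.prefix_append L ρ), ?_⟩, bisim_refl K A h ν⟩
        have := List.length_pos_iff.mpr hρ
        show ν.length < (L ++ ρ).length
        rw [List.length_append]; omega
      · push_neg at hc
        have hLν : L <+: ν :=
          List.prefix_of_prefix_length_le (List.prefix_append L ρ') hpre hc.le
        obtain ⟨ν₀, rfl⟩ := hLν
        have hν₀ne : ν₀ ≠ [] := by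
          rintro rfl; simp at hc
        have hν₀pre : ν₀ <+: ρ' := (List.prefix_append_right_inj L).mp hpre
        have hν₀len : ν₀.length < ρ'.length := by
          have : (L ++ ν₀).length < (L ++ ρ').length := hlen
          rw [List.length_append, List.length_append] at this; omega
        obtain ⟨ν₀', hP', hb⟩ := hbw ν₀ ⟨hν₀ne, hν₀pre, hν₀len⟩
        have hh1 : ρL.getLastI = ν₀'.headI := by
          rw [h1, headI_prefix' hP'.2.1 hP'.1]
        have hh2 : ρL.getLastI = ν₀.headI := by
          rw [h2, headI_prefix' hν₀pre hν₀ne]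
        have hbig := ih ν₀' ν₀ ρL hP'.1 hν₀ne hb hh1 hh2
        refine ⟨L ++ ν₀', ⟨?_, ?_, ?_⟩, hbig⟩
        · simp [hP'.1]
        · exact (List.prefix_append_right_inj L).mpr hP'.2.1
        · show (L ++ ν₀').length < (L ++ ρ).length
          rw [List.length_append, List.length_append]
          exact Nat.add_lt_add_left hP'.2.2 _

/-- left star-concatenation preserves `h`-prefix bisimilarity. -/
theorem stmt4 [Inhabited S] (K : Kripke AP S) (A : ∀ ℓ : ι, NFA (Set AP) (Q ℓ))
    (h : ℕ) (ρ ρ' ρL : List S)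
    (hρ : K.IsTrace ρ) (hρ' : K.IsTrace ρ') (hρL : K.IsTrace ρL)
    (hbis : PrefixBisim K A h ρ ρ')
    (h1 : ρL.getLastI = ρ.headI) (h2 : ρL.getLastI = ρ'.headI) :
    PrefixBisim K A h (starCat ρL ρ) (starCat ρL ρ') :=
  stmt4_aux K A h ρ ρ' ρL hρ.1 hρ'.1 hbis h1 h2
end

section
/- For every h ≥ 0, any two traces of a Kripke structure that have the same h-sampling word are h-prefix bisimilar. -/
variable {AP S : Type} {ι : Type} {Q : ι → Type}

section Aux
variable [Inhabited S] (K : Kripke AP S) (A : ∀ ℓ : ι, NFA (Set AP) (Q ℓ))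

lemma PS_one_mem (ρ : List S) : ∀ h, 1 ∈ PS K A ρ h
  | 0 => Set.mem_insert 1 _
  | h+1 => Set.mem_union_left _ (PS_one_mem ρ h)

lemma PS_len_mem (ρ : List S) : ∀ h, ρ.length ∈ PS K A ρ h
  | 0 => Set.mem_insert_of_mem _ rfl
  | h+1 => Set.mem_union_left _ (PS_len_mem ρ h)

lemma Skel_subset (ρ : List S) (i j : ℕ) (hij : i < j) (hi : 1 ≤ i) (hj : j ≤ ρ.length) :
    Skel K A ρ i j ⊆ Set.Icc 1 ρ.length := by
  rintro x (hx | hx)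
  · rcases hx with hx | hx
    · exact hx ▸ ⟨hi, le_trans (le_of_lt hij) hj⟩
    · exact hx ▸ ⟨le_trans hi (le_of_lt hij), hj⟩
  · rcases hx with ⟨⟨h1, h2⟩, -⟩
    exact ⟨by omega, by omega⟩

lemma PS_subset_Icc (ρ : List S) (hρ : ρ ≠ []) : ∀ h, PS K A ρ h ⊆ Set.Icc 1 ρ.length := by
  have hlen : 1 ≤ ρ.length := List.length_pos_iff.2 hρ
  intro h
  induction h with
  | zero =>
    rintro x (hx | hx) <;> subst hx
    · exact ⟨le_refl 1, hlen⟩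
    · exact ⟨hlen, le_refl _⟩
  | succ g ih =>
    rintro x (hx | hx)
    · exact ih hx
    · rcases hx with ⟨i, hi, j, hj, hij, -, hsk⟩
      exact Skel_subset K A ρ i j hij (ih hi).1 (ih hj).2 hsk

lemma PS_mono (ρ : List S) (h : ℕ) : PS K A ρ h ⊆ PS K A ρ (h+1) :=
  Set.subset_union_left

lemma PS_mono_le (ρ : List S) {g h : ℕ} (hgh : g ≤ h) : PS K A ρ g ⊆ PS K A ρ h := by
  induction h with
  | zero =>
    have : g = 0 := by omega
    subst this; exact le_refl _
  | succ n ih =>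
    rcases Nat.lt_or_ge g (n+1) with hl | hl
    · exact (ih (by omega)).trans (PS_mono K A ρ n)
    · have : g = n+1 := by omega
      subst this; exact le_refl _


lemma summary_take (ρ : List S) {k m : ℕ} (hmk : m ≤ k) :
    Summary K A ((ρ.take k).take m) = Summary K A (ρ.take m) := by
  rw [List.take_take, min_eq_left hmk]

lemma mem_Skel {ρ : List S} {i j x : ℕ} : x ∈ Skel K A ρ i j ↔ (x = i ∨ x = j) ∨
    (x ∈ Set.Icc (i+1) (j-1) ∧ ∀ m ∈ Set.Icc (i+1) (j-1),
      Summary K A (ρ.take m) = Summary K A (ρ.take x) → x ≤ m) := Iff.rfl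

lemma mem_PS_succ {ρ : List S} {x h : ℕ} : x ∈ PS K A ρ (h+1) ↔ x ∈ PS K A ρ h ∨
    ∃ i ∈ PS K A ρ h, ∃ j ∈ PS K A ρ h, i < j ∧ (∀ m ∈ PS K A ρ h, m ≤ i ∨ j ≤ m) ∧
      x ∈ Skel K A ρ i j := Iff.rfl

lemma Skel_take (ρ : List S) {i j k : ℕ} (hjk : j ≤ k) :
    Skel K A (ρ.take k) i j = Skel K A ρ i j := by
  have hs : ∀ m, m ∈ Set.Icc (i+1) (j-1) →
      Summary K A ((ρ.take k).take m) = Summary K A (ρ.take m) := fun m hm =>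
    summary_take K A ρ (by have := hm.2; omega)
  unfold Skel
  congr 1
  ext x
  simp only [Set.mem_setOf_eq]
  constructor
  · rintro ⟨hx, hmin⟩
    exact ⟨hx, fun m hm hsum => hmin m hm (by rw [hs m hm, hs x hx]; exact hsum)⟩
  · rintro ⟨hx, hmin⟩
    exact ⟨hx, fun m hm hsum => hmin m hm (by rw [← hs m hm, ← hs x hx]; exact hsum)⟩

lemma PS_take (ρ : List S) (hρ : ρ ≠ []) {k : ℕ} (hk1 : 1 ≤ k) (hk2 : k ≤ ρ.length) :
    ∀ h, PS K A (ρ.take k) h = (PS K A ρ h ∩ Set.Icc 1 (k-1)) ∪ {k} := by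
  have hρlen : 1 ≤ ρ.length := List.length_pos_iff.2 hρ
  intro h
  induction h with
  | zero =>
    have hlen : (ρ.take k).length = k := by rw [List.length_take]; omega
    show ({1, (ρ.take k).length} : Set ℕ) = ({1, ρ.length} ∩ Set.Icc 1 (k-1)) ∪ {k}
    rw [hlen]
    ext x
    simp only [Set.mem_insert_iff, Set.mem_singleton_iff, Set.mem_union, Set.mem_inter_iff,
      Set.mem_Icc]
    omega
  | succ h ih =>
    ext x
    constructor
    · intro hx
      rcases (mem_PS_succ K A).1 hx with hx | ⟨a, ha, b, hb, hab, hcons, hskel⟩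
      · -- x ∈ PS (take) h
        rw [ih] at hx
        rcases hx with ⟨hxP, hxI⟩ | hx
        · exact Or.inl ⟨PS_mono K A ρ h hxP, hxI⟩
        · exact Or.inr hx
      · rw [ih] at ha hb
        have hbk : b ≤ k := by
          rcases hb with ⟨h1, h2⟩ | hb
          · have := h2.2; omega
          · rw [Set.mem_singleton_iff] at hb; omega
        have haI : a ∈ PS K A ρ h ∧ a ≤ k - 1 := by
          rcases ha with ⟨h1, h2⟩ | ha
          · exact ⟨h1, h2.2⟩
          · rw [Set.mem_singleton_iff] at ha
            have hb2 : b ≤ k := hbk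
            omega
        have ha1 : 1 ≤ a := ((PS_subset_Icc K A ρ hρ h) haI.1).1
        rw [Skel_take K A ρ hbk] at hskel
        rcases (mem_Skel K A).1 hskel with (rfl | rfl) | ⟨hxIcc, hmin⟩
        · exact Or.inl ⟨PS_mono K A ρ h haI.1, ⟨ha1, haI.2⟩⟩
        · rcases hb with ⟨h1, h2⟩ | hb
          · exact Or.inl ⟨PS_mono K A ρ h h1, h2⟩
          · exact Or.inr hb
        · rw [Set.mem_Icc] at hxIcc
          have hxk : x ≤ k - 1 := by omega
          rcases hb with ⟨hbP, hbI⟩ | hb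
          · -- b ∈ P and b ≤ k-1 : pair (a, b) is consecutive in PS ρ h
            rw [Set.mem_Icc] at hbI
            have consP : ∀ m ∈ PS K A ρ h, m ≤ a ∨ b ≤ m := by
              intro m hm
              by_contra hcon
              push_neg at hcon
              have hm1 : 1 ≤ m := ((PS_subset_Icc K A ρ hρ h) hm).1
              have : m ∈ PS K A (ρ.take k) h := by
                rw [ih]; exact Or.inl ⟨hm, ⟨hm1, by omega⟩⟩
              rcases hcons m this with h' | h' <;> omega
            refine Or.inl ⟨(mem_PS_succ K A).2 (Or.inr ⟨a, haI.1, b, hbP, hab, consP,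
              (mem_Skel K A).2 (Or.inr ⟨Set.mem_Icc.2 hxIcc, hmin⟩)⟩), ⟨by omega, hxk⟩⟩
          · -- b = k
            rw [Set.mem_singleton_iff] at hb
            have hTne : {m | m ∈ PS K A ρ h ∧ a < m}.Nonempty :=
              ⟨ρ.length, PS_len_mem K A ρ h, by omega⟩
            set b2 := sInf {m | m ∈ PS K A ρ h ∧ a < m} with hb2def
            have hb2 : b2 ∈ {m | m ∈ PS K A ρ h ∧ a < m} := Nat.sInf_mem hTne
            have hab2 : a < b2 := hb2.2
            have hb2min : ∀ m, m ∈ PS K A ρ h → a < m → b2 ≤ m := fun m h1 h2 =>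
              Nat.sInf_le ⟨h1, h2⟩
            have hb2k : k ≤ b2 := by
              by_contra hcon
              push_neg at hcon
              have hm1 : 1 ≤ b2 := ((PS_subset_Icc K A ρ hρ h) hb2.1).1
              have hmem : b2 ∈ PS K A (ρ.take k) h := by
                rw [ih]; exact Or.inl ⟨hb2.1, ⟨hm1, by omega⟩⟩
              rcases hcons b2 hmem with h' | h' <;> omega
            have consP : ∀ m ∈ PS K A ρ h, m ≤ a ∨ b2 ≤ m := by
              intro m hm
              rcases le_or_gt m a with h' | h'
              · exact Or.inl h'
              · exact Or.inr (hb2min m hm h')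
            refine Or.inl ⟨(mem_PS_succ K A).2 (Or.inr ⟨a, haI.1, b2, hb2.1, by omega, consP,
              (mem_Skel K A).2 (Or.inr ⟨Set.mem_Icc.2 ⟨by omega, by omega⟩, ?_⟩)⟩),
              ⟨by omega, hxk⟩⟩
            intro m hm hsum
            rw [Set.mem_Icc] at hm
            rcases le_or_gt m (b - 1) with h' | h'
            · exact hmin m (Set.mem_Icc.2 ⟨hm.1, h'⟩) hsum
            · omega
    · intro hx
      rcases hx with ⟨hxPS, hxI⟩ | hx
      · rw [Set.mem_Icc] at hxI
        rcases (mem_PS_succ K A).1 hxPS with hxP | ⟨i, hi, j, hj, hij, hcons, hskel⟩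
        · exact Or.inl (by rw [ih]; exact Or.inl ⟨hxP, Set.mem_Icc.2 hxI⟩)
        · rcases (mem_Skel K A).1 hskel with (rfl | rfl) | ⟨hxIcc, hmin⟩
          · exact Or.inl (by rw [ih]; exact Or.inl ⟨hi, Set.mem_Icc.2 hxI⟩)
          · exact Or.inl (by rw [ih]; exact Or.inl ⟨hj, Set.mem_Icc.2 hxI⟩)
          · rw [Set.mem_Icc] at hxIcc
            have hi1 : 1 ≤ i := ((PS_subset_Icc K A ρ hρ h) hi).1
            have hiPk : i ∈ PS K A (ρ.take k) h := by
              rw [ih]; exact Or.inl ⟨hi, Set.mem_Icc.2 ⟨hi1, by omega⟩⟩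
            rcases le_or_gt j (k - 1) with hjk | hjk
            · have hjPk : j ∈ PS K A (ρ.take k) h := by
                rw [ih]
                exact Or.inl ⟨hj, Set.mem_Icc.2 ⟨((PS_subset_Icc K A ρ hρ h) hj).1, hjk⟩⟩
              have consPk : ∀ m ∈ PS K A (ρ.take k) h, m ≤ i ∨ j ≤ m := by
                intro m hm
                rw [ih] at hm
                rcases hm with ⟨hmP, _⟩ | hm
                · exact hcons m hmP
                · rw [Set.mem_singleton_iff] at hm; omega
              refine Or.inr ⟨i, hiPk, j, hjPk, hij, consPk, ?_⟩
              rw [Skel_take K A ρ (show j ≤ k by omega)]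
              exact (mem_Skel K A).2 (Or.inr ⟨Set.mem_Icc.2 hxIcc, hmin⟩)
            · have hkPk : k ∈ PS K A (ρ.take k) h := by
                rw [ih]; exact Or.inr rfl
              have consPk : ∀ m ∈ PS K A (ρ.take k) h, m ≤ i ∨ k ≤ m := by
                intro m hm
                rw [ih] at hm
                rcases hm with ⟨hmP, hmI⟩ | hm
                · rw [Set.mem_Icc] at hmI
                  rcases hcons m hmP with h' | h' <;> omega
                · rw [Set.mem_singleton_iff] at hm; omega
              refine Or.inr ⟨i, hiPk, k, hkPk, by omega, consPk, ?_⟩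
              rw [Skel_take K A ρ (le_refl k)]
              refine (mem_Skel K A).2 (Or.inr ⟨Set.mem_Icc.2 ⟨hxIcc.1, by omega⟩, ?_⟩)
              intro m hm hsum
              rw [Set.mem_Icc] at hm
              exact hmin m (Set.mem_Icc.2 ⟨hm.1, by omega⟩) hsum
      · exact Or.inl (by rw [ih]; exact Or.inr hx)


noncomputable def psList (ρ : List S) (h : ℕ) : List ℕ :=
  (List.range (ρ.length + 1)).filter
    (fun i => @decide (i ∈ PS K A ρ h) (Classical.propDecidable _))

lemma samplingWord_def (ρ : List S) (h : ℕ) :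
    samplingWord K A ρ h = (psList K A ρ h).map (fun i => Summary K A (ρ.take i)) := rfl

lemma psList_sorted (ρ : List S) (h : ℕ) : (psList K A ρ h).Pairwise (· < ·) :=
  List.pairwise_lt_range.sublist (List.filter_sublist)

lemma mem_psList {ρ : List S} (hρ : ρ ≠ []) {h x : ℕ} :
    x ∈ psList K A ρ h ↔ x ∈ PS K A ρ h := by
  unfold psList
  simp only [List.mem_filter, List.mem_range, decide_eq_true_eq]
  constructor
  · exact fun h => h.2
  · intro hx
    have := PS_subset_Icc K A ρ hρ h hx
    rw [Set.mem_Icc] at this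
    exact ⟨by omega, hx⟩

lemma psList_get_one {ρ : List S} (hρ : ρ ≠ []) {h : ℕ} {i : ℕ}
    (hi : i < (psList K A ρ h).length) (hone : (psList K A ρ h).get ⟨i, hi⟩ = 1) : i = 0 := by
  by_contra hne
  have h0 : 0 < (psList K A ρ h).length := by omega
  have hlt := (psList_sorted K A ρ h).sortedLT.strictMono_get
    (show (⟨0, h0⟩ : Fin _) < ⟨i, hi⟩ by exact Fin.mk_lt_mk.2 (by omega))
  rw [hone] at hlt
  have hmem : (psList K A ρ h).get ⟨0, h0⟩ ∈ psList K A ρ h := List.get_mem _ _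
  have := ((PS_subset_Icc K A ρ hρ h) ((mem_psList K A hρ).1 hmem)).1
  omega

lemma psList_get_len {ρ : List S} (hρ : ρ ≠ []) {h : ℕ} {i : ℕ}
    (hi : i < (psList K A ρ h).length)
    (hlast : (psList K A ρ h).get ⟨i, hi⟩ = ρ.length) : i = (psList K A ρ h).length - 1 := by
  by_contra hne
  have hl : (psList K A ρ h).length - 1 < (psList K A ρ h).length := by omega
  have hlt := (psList_sorted K A ρ h).sortedLT.strictMono_get
    (show (⟨i, hi⟩ : Fin _) < ⟨(psList K A ρ h).length - 1, hl⟩ by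
      exact Fin.mk_lt_mk.2 (by omega))
  rw [hlast] at hlt
  have hmem : (psList K A ρ h).get ⟨_, hl⟩ ∈ psList K A ρ h := List.get_mem _ _
  have := ((PS_subset_Icc K A ρ hρ h) ((mem_psList K A hρ).1 hmem)).2
  omega

lemma psList_get_mem {ρ : List S} (hρ : ρ ≠ []) {h : ℕ} {i : ℕ}
    (hi : i < (psList K A ρ h).length) : (psList K A ρ h).get ⟨i, hi⟩ ∈ PS K A ρ h :=
  (mem_psList K A hρ).1 (List.get_mem _ _)

lemma word_len {ρ ρ' : List S} {h : ℕ}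
    (hw : samplingWord K A ρ h = samplingWord K A ρ' h) :
    (psList K A ρ h).length = (psList K A ρ' h).length := by
  have := congrArg List.length hw
  simpa [samplingWord_def] using this

lemma word_get {ρ ρ' : List S} {h : ℕ}
    (hw : samplingWord K A ρ h = samplingWord K A ρ' h) :
    ∀ i (h1 : i < (psList K A ρ h).length) (h2 : i < (psList K A ρ' h).length),
      Summary K A (ρ.take ((psList K A ρ h).get ⟨i, h1⟩)) =
      Summary K A (ρ'.take ((psList K A ρ' h).get ⟨i, h2⟩)) := by
  intro i h1 h2
  rw [samplingWord_def, samplingWord_def] at hw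
  have h1' : i < ((psList K A ρ h).map (fun i => Summary K A (ρ.take i))).length := by
    simpa using h1
  have h2' : i < ((psList K A ρ' h).map (fun i => Summary K A (ρ'.take i))).length := by
    simpa using h2
  have := List.get_of_eq hw ⟨i, h1'⟩
  simpa [List.getElem_map] using this

lemma summary_eq_of_word_eq {ρ ρ' : List S} (hρ : ρ ≠ []) (hρ' : ρ' ≠ []) {h : ℕ}
    (hw : samplingWord K A ρ h = samplingWord K A ρ' h) :
    Summary K A ρ = Summary K A ρ' := by
  have hlen := word_len K A hw
  have hne : (psList K A ρ h) ≠ [] := by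
    intro hcon
    have := (mem_psList K A hρ).2 (PS_one_mem K A ρ h)
    rw [hcon] at this; exact absurd this (List.not_mem_nil (a := 1))
  have h0 : 0 < (psList K A ρ h).length := List.length_pos_iff.2 hne
  have h1 : (psList K A ρ h).length - 1 < (psList K A ρ h).length := by omega
  have h2 : (psList K A ρ h).length - 1 < (psList K A ρ' h).length := by omega
  have hg := word_get K A hw ((psList K A ρ h).length - 1) h1 h2
  have hgl : (psList K A ρ h).get ⟨_, h1⟩ = ρ.length := by
    rcases (List.mem_iff_get).1 ((mem_psList K A hρ).2 (PS_len_mem K A ρ h)) with ⟨⟨j, hj⟩, hjeq⟩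
    have := psList_get_len K A hρ hj hjeq
    subst this
    exact hjeq
  have hgl' : (psList K A ρ' h).get ⟨_, h2⟩ = ρ'.length := by
    rcases (List.mem_iff_get).1 ((mem_psList K A hρ').2 (PS_len_mem K A ρ' h)) with ⟨⟨j, hj⟩, hjeq⟩
    have hj' := psList_get_len K A hρ' hj hjeq
    subst hj'
    have : (psList K A ρ h).length - 1 = (psList K A ρ' h).length - 1 := by omega
    simp only [this]
    exact hjeq
  rw [hgl, hgl', List.take_length, List.take_length] at hg
  exact hg

lemma psList_get_zero {ρ : List S} (hρ : ρ ≠ []) {h : ℕ}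
    (h0 : 0 < (psList K A ρ h).length) : (psList K A ρ h).get ⟨0, h0⟩ = 1 := by
  rcases List.mem_iff_get.1 ((mem_psList K A hρ).2 (PS_one_mem K A ρ h)) with ⟨⟨j, hj⟩, hjeq⟩
  have := psList_get_one K A hρ hj hjeq
  subst this
  exact hjeq

lemma psList_get_last {ρ : List S} (hρ : ρ ≠ []) {h : ℕ}
    (h0 : (psList K A ρ h).length - 1 < (psList K A ρ h).length) :
    (psList K A ρ h).get ⟨(psList K A ρ h).length - 1, h0⟩ = ρ.length := by
  rcases List.mem_iff_get.1 ((mem_psList K A hρ).2 (PS_len_mem K A ρ h)) with ⟨⟨j, hj⟩, hjeq⟩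
  have := psList_get_len K A hρ hj hjeq
  subst this
  exact hjeq

lemma corr_zero {ρ ρ' : List S} (hρ : ρ ≠ []) (hρ' : ρ' ≠ []) {h : ℕ}
    (hw : samplingWord K A ρ h = samplingWord K A ρ' h) :
    ∀ i (h1 : i < (psList K A ρ h).length) (h2 : i < (psList K A ρ' h).length),
      (psList K A ρ h).get ⟨i, h1⟩ ∈ PS K A ρ 0 →
      (psList K A ρ' h).get ⟨i, h2⟩ ∈ PS K A ρ' 0 := by
  intro i h1 h2 hx
  have hlen := word_len K A hw
  have hx' : (psList K A ρ h).get ⟨i, h1⟩ = 1 ∨ (psList K A ρ h).get ⟨i, h1⟩ = ρ.length := by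
    simpa [PS, Set.mem_insert_iff, Set.mem_singleton_iff] using hx
  show _ ∈ ({1, ρ'.length} : Set ℕ)
  rcases hx' with hx' | hx'
  · have hi0 := psList_get_one K A hρ h1 hx'
    subst hi0
    rw [psList_get_zero K A hρ' h2]
    exact Set.mem_insert 1 _
  · have hil := psList_get_len K A hρ h1 hx'
    subst hil
    have hidx : (psList K A ρ h).length - 1 = (psList K A ρ' h).length - 1 := by omega
    have : (psList K A ρ' h).get ⟨(psList K A ρ h).length - 1, h2⟩ =
        (psList K A ρ' h).get ⟨(psList K A ρ' h).length - 1, by omega⟩ := by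
      congr 1
      exact Fin.ext hidx
    rw [this, psList_get_last K A hρ']
    exact Set.mem_insert_of_mem _ rfl

lemma corr_step {ρ ρ' : List S} (hρ : ρ ≠ []) (hρ' : ρ' ≠ []) {h g : ℕ} (hg : g + 1 ≤ h)
    (hw : samplingWord K A ρ h = samplingWord K A ρ' h)
    (hprev : ∀ i (h1 : i < (psList K A ρ h).length) (h2 : i < (psList K A ρ' h).length),
      ((psList K A ρ h).get ⟨i, h1⟩ ∈ PS K A ρ g ↔
       (psList K A ρ' h).get ⟨i, h2⟩ ∈ PS K A ρ' g)) :
    ∀ i (h1 : i < (psList K A ρ h).length) (h2 : i < (psList K A ρ' h).length),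
      (psList K A ρ h).get ⟨i, h1⟩ ∈ PS K A ρ (g+1) →
      (psList K A ρ' h).get ⟨i, h2⟩ ∈ PS K A ρ' (g+1) := by
  intro n hn hn' hk
  have hlen := word_len K A hw
  have hsm := (psList_sorted K A ρ h).sortedLT.strictMono_get
  have hsm' := (psList_sorted K A ρ' h).sortedLT.strictMono_get
  rcases (mem_PS_succ K A).1 hk with hk0 | ⟨i, hi, j, hj, hij, hcons, hskel⟩
  · exact (mem_PS_succ K A).2 (Or.inl ((hprev n hn hn').1 hk0))
  · rcases (mem_Skel K A).1 hskel with (hki | hkj) | ⟨hxIcc, hmin⟩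
    · exact (mem_PS_succ K A).2 (Or.inl ((hprev n hn hn').1 (by rw [hki]; exact hi)))
    · exact (mem_PS_succ K A).2 (Or.inl ((hprev n hn hn').1 (by rw [hkj]; exact hj)))
    · rw [Set.mem_Icc] at hxIcc
      rcases List.mem_iff_get.1 ((mem_psList K A hρ).2 (PS_mono_le K A ρ (by omega : g ≤ h) hi))
        with ⟨⟨a, haL⟩, haeq⟩
      rcases List.mem_iff_get.1 ((mem_psList K A hρ).2 (PS_mono_le K A ρ (by omega : g ≤ h) hj))
        with ⟨⟨b, hbL⟩, hbeq⟩
      have han : a < n := by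
        have hlt : (psList K A ρ h).get ⟨a, haL⟩ < (psList K A ρ h).get ⟨n, hn⟩ := by
          rw [haeq]; omega
        exact Fin.mk_lt_mk.1 (hsm.lt_iff_lt.1 hlt)
      have hnb : n < b := by
        have hlt : (psList K A ρ h).get ⟨n, hn⟩ < (psList K A ρ h).get ⟨b, hbL⟩ := by
          rw [hbeq]; omega
        exact Fin.mk_lt_mk.1 (hsm.lt_iff_lt.1 hlt)
      have haL' : a < (psList K A ρ' h).length := by omega
      have hbL' : b < (psList K A ρ' h).length := by omega
      have hi' : (psList K A ρ' h).get ⟨a, haL'⟩ ∈ PS K A ρ' g :=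
        (hprev a haL haL').1 (by rw [haeq]; exact hi)
      have hj' : (psList K A ρ' h).get ⟨b, hbL'⟩ ∈ PS K A ρ' g :=
        (hprev b hbL hbL').1 (by rw [hbeq]; exact hj)
      have hi'k' : (psList K A ρ' h).get ⟨a, haL'⟩ < (psList K A ρ' h).get ⟨n, hn'⟩ :=
        hsm' (Fin.mk_lt_mk.2 han)
      have hk'j' : (psList K A ρ' h).get ⟨n, hn'⟩ < (psList K A ρ' h).get ⟨b, hbL'⟩ :=
        hsm' (Fin.mk_lt_mk.2 hnb)
      have hcons' : ∀ m ∈ PS K A ρ' g,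
          m ≤ (psList K A ρ' h).get ⟨a, haL'⟩ ∨ (psList K A ρ' h).get ⟨b, hbL'⟩ ≤ m := by
        intro m hm
        by_contra hcon
        push_neg at hcon
        rcases List.mem_iff_get.1 ((mem_psList K A hρ').2
          (PS_mono_le K A ρ' (by omega : g ≤ h) hm)) with ⟨⟨c, hcL'⟩, hceq⟩
        have hcL : c < (psList K A ρ h).length := by omega
        have hac : a < c := by
          have hlt : (psList K A ρ' h).get ⟨a, haL'⟩ < (psList K A ρ' h).get ⟨c, hcL'⟩ := by
            rw [hceq]; omega
          exact Fin.mk_lt_mk.1 (hsm'.lt_iff_lt.1 hlt)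
        have hcb : c < b := by
          have hlt : (psList K A ρ' h).get ⟨c, hcL'⟩ < (psList K A ρ' h).get ⟨b, hbL'⟩ := by
            rw [hceq]; omega
          exact Fin.mk_lt_mk.1 (hsm'.lt_iff_lt.1 hlt)
        have hmL : (psList K A ρ h).get ⟨c, hcL⟩ ∈ PS K A ρ g :=
          (hprev c hcL hcL').2 (by rw [hceq]; exact hm)
        have h1 : (psList K A ρ h).get ⟨a, haL⟩ < (psList K A ρ h).get ⟨c, hcL⟩ :=
          hsm (Fin.mk_lt_mk.2 hac)
        have h2 : (psList K A ρ h).get ⟨c, hcL⟩ < (psList K A ρ h).get ⟨b, hbL⟩ :=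
          hsm (Fin.mk_lt_mk.2 hcb)
        rw [haeq] at h1
        rw [hbeq] at h2
        rcases hcons _ hmL with h' | h' <;> omega
      have hk'1 : (psList K A ρ' h).get ⟨n, hn'⟩ ∈
          Set.Icc ((psList K A ρ' h).get ⟨a, haL'⟩ + 1) ((psList K A ρ' h).get ⟨b, hbL'⟩ - 1) :=
        Set.mem_Icc.2 ⟨by omega, by omega⟩
      have hTne : {m | m ∈ Set.Icc ((psList K A ρ' h).get ⟨a, haL'⟩ + 1)
            ((psList K A ρ' h).get ⟨b, hbL'⟩ - 1) ∧
          Summary K A (ρ'.take m) =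
            Summary K A (ρ'.take ((psList K A ρ' h).get ⟨n, hn'⟩))}.Nonempty := ⟨_, hk'1, rfl⟩
      obtain ⟨m0, hm0, hm0min⟩ : ∃ m0, (m0 ∈ Set.Icc ((psList K A ρ' h).get ⟨a, haL'⟩ + 1)
            ((psList K A ρ' h).get ⟨b, hbL'⟩ - 1) ∧
          Summary K A (ρ'.take m0) =
            Summary K A (ρ'.take ((psList K A ρ' h).get ⟨n, hn'⟩))) ∧
          ∀ x, (x ∈ Set.Icc ((psList K A ρ' h).get ⟨a, haL'⟩ + 1)
              ((psList K A ρ' h).get ⟨b, hbL'⟩ - 1) ∧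
            Summary K A (ρ'.take x) =
              Summary K A (ρ'.take ((psList K A ρ' h).get ⟨n, hn'⟩))) → m0 ≤ x :=
        ⟨_, Nat.sInf_mem hTne, fun x hx => Nat.sInf_le hx⟩
      have hm0le : m0 ≤ (psList K A ρ' h).get ⟨n, hn'⟩ := hm0min _ ⟨hk'1, rfl⟩
      have hm0Skel : m0 ∈ Skel K A ρ'
          ((psList K A ρ' h).get ⟨a, haL'⟩) ((psList K A ρ' h).get ⟨b, hbL'⟩) := by
        refine (mem_Skel K A).2 (Or.inr ⟨hm0.1, fun m hm hsum => ?_⟩)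
        exact hm0min m ⟨hm, hsum.trans hm0.2⟩
      have hm0PS : m0 ∈ PS K A ρ' (g+1) :=
        (mem_PS_succ K A).2 (Or.inr ⟨_, hi', _, hj', by omega, hcons', hm0Skel⟩)
      rcases List.mem_iff_get.1 ((mem_psList K A hρ').2
        (PS_mono_le K A ρ' hg hm0PS)) with ⟨⟨c, hcL'⟩, hceq⟩
      have hcL : c < (psList K A ρ h).length := by omega
      have hm0Icc := hm0.1
      rw [Set.mem_Icc] at hm0Icc
      have hac : a < c := by
        have hlt : (psList K A ρ' h).get ⟨a, haL'⟩ < (psList K A ρ' h).get ⟨c, hcL'⟩ := by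
          rw [hceq]; omega
        exact Fin.mk_lt_mk.1 (hsm'.lt_iff_lt.1 hlt)
      have hcb : c < b := by
        have hlt : (psList K A ρ' h).get ⟨c, hcL'⟩ < (psList K A ρ' h).get ⟨b, hbL'⟩ := by
          rw [hceq]; omega
        exact Fin.mk_lt_mk.1 (hsm'.lt_iff_lt.1 hlt)
      have h1 : (psList K A ρ h).get ⟨a, haL⟩ < (psList K A ρ h).get ⟨c, hcL⟩ :=
        hsm (Fin.mk_lt_mk.2 hac)
      have h2 : (psList K A ρ h).get ⟨c, hcL⟩ < (psList K A ρ h).get ⟨b, hbL⟩ :=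
        hsm (Fin.mk_lt_mk.2 hcb)
      rw [haeq] at h1
      rw [hbeq] at h2
      have hsum1 := word_get K A hw c hcL hcL'
      have hsum2 := word_get K A hw n hn hn'
      have hchain : Summary K A (ρ.take ((psList K A ρ h).get ⟨c, hcL⟩)) =
          Summary K A (ρ.take ((psList K A ρ h).get ⟨n, hn⟩)) := by
        rw [hsum1, hceq, hm0.2, ← hsum2]
      have hklec : (psList K A ρ h).get ⟨n, hn⟩ ≤ (psList K A ρ h).get ⟨c, hcL⟩ :=
        hmin _ (Set.mem_Icc.2 ⟨by omega, by omega⟩) hchain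
      have hnc : n ≤ c := by
        by_contra hcon
        push_neg at hcon
        have hlt : (psList K A ρ h).get ⟨c, hcL⟩ < (psList K A ρ h).get ⟨n, hn⟩ :=
          hsm (Fin.mk_lt_mk.2 hcon)
        omega
      have hk'm0 : (psList K A ρ' h).get ⟨n, hn'⟩ ≤ m0 := by
        rcases Nat.eq_or_lt_of_le hnc with h' | h'
        · rw [← hceq]
          subst h'
          exact le_refl _
        · have hlt : (psList K A ρ' h).get ⟨n, hn'⟩ < (psList K A ρ' h).get ⟨c, hcL'⟩ :=
            hsm' (Fin.mk_lt_mk.2 h')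
          rw [hceq] at hlt
          omega
      have hfin : m0 = (psList K A ρ' h).get ⟨n, hn'⟩ := by omega
      rw [← hfin]
      exact hm0PS

lemma corr {ρ ρ' : List S} (hρ : ρ ≠ []) (hρ' : ρ' ≠ []) {h : ℕ}
    (hw : samplingWord K A ρ h = samplingWord K A ρ' h) :
    ∀ g, g ≤ h → ∀ i (h1 : i < (psList K A ρ h).length) (h2 : i < (psList K A ρ' h).length),
      ((psList K A ρ h).get ⟨i, h1⟩ ∈ PS K A ρ g ↔
       (psList K A ρ' h).get ⟨i, h2⟩ ∈ PS K A ρ' g) := by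
  intro g
  induction g with
  | zero =>
    intro _ i h1 h2
    exact ⟨corr_zero K A hρ hρ' hw i h1 h2, corr_zero K A hρ' hρ hw.symm i h2 h1⟩
  | succ g ih =>
    intro hg i h1 h2
    have hprev : ∀ i (h1 : i < (psList K A ρ h).length) (h2 : i < (psList K A ρ' h).length),
        ((psList K A ρ h).get ⟨i, h1⟩ ∈ PS K A ρ g ↔
         (psList K A ρ' h).get ⟨i, h2⟩ ∈ PS K A ρ' g) := fun i h1 h2 => ih (by omega) i h1 h2
    exact ⟨corr_step K A hρ hρ' hg hw hprev i h1 h2,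
      corr_step K A hρ' hρ hg hw.symm (fun i h1 h2 => (hprev i h2 h1).symm) i h2 h1⟩

lemma psList_take {ρ : List S} (hρ : ρ ≠ []) {k : ℕ} (hk1 : 1 ≤ k) (hk2 : k ≤ ρ.length)
    (h : ℕ) : psList K A (ρ.take k) h =
      ((psList K A ρ h).filter (fun x => decide (x < k))) ++ [k] := by
  have hlt' : (ρ.take k).length = k := by rw [List.length_take]; omega
  have htne : ρ.take k ≠ [] := by
    intro hcon
    rw [hcon] at hlt'
    simp at hlt'
    omega
  have hsort1 : (psList K A (ρ.take k) h).Pairwise (· < ·) := psList_sorted K A _ h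
  have hsort2 : (((psList K A ρ h).filter (fun x => decide (x < k))) ++ [k]).Pairwise (· < ·) := by
    refine List.pairwise_append.2 ⟨(psList_sorted K A ρ h).sublist List.filter_sublist,
      List.pairwise_singleton _ _, ?_⟩
    intro x hx y hy
    rw [List.mem_singleton] at hy
    subst hy
    rcases List.mem_filter.1 hx with ⟨-, hx2⟩
    exact of_decide_eq_true hx2
  have hperm : List.Perm (psList K A (ρ.take k) h)
      (((psList K A ρ h).filter (fun x => decide (x < k))) ++ [k]) := by
    rw [List.perm_ext_iff_of_nodup (hsort1.imp ne_of_lt) (hsort2.imp ne_of_lt)]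
    intro a
    rw [mem_psList K A htne, PS_take K A ρ hρ hk1 hk2 h, List.mem_append, List.mem_filter,
      List.mem_singleton, mem_psList K A hρ]
    constructor
    · rintro (⟨h1, h2⟩ | h1)
      · rw [Set.mem_Icc] at h2
        exact Or.inl ⟨h1, decide_eq_true (by omega)⟩
      · exact Or.inr h1
    · rintro (⟨h1, h2⟩ | h1)
      · have h2' := of_decide_eq_true h2
        have := ((PS_subset_Icc K A ρ hρ h) h1).1
        exact Or.inl ⟨h1, Set.mem_Icc.2 ⟨this, by omega⟩⟩
      · exact Or.inr h1
  exact List.Perm.eq_of_pairwise (fun a _ _ _ h1 h2 => absurd (h1.trans h2) (lt_irrefl a)) hsort1 hsort2 hperm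

lemma word_take {ρ : List S} (hρ : ρ ≠ []) {k : ℕ} (hk1 : 1 ≤ k) (hk2 : k ≤ ρ.length)
    (h : ℕ) : samplingWord K A (ρ.take k) h =
      ((psList K A ρ h).filter (fun x => decide (x < k))).map
        (fun i => Summary K A (ρ.take i)) ++ [Summary K A (ρ.take k)] := by
  rw [samplingWord_def, psList_take K A hρ hk1 hk2 h, List.map_append]
  congr 1
  · apply List.map_congr_left
    intro x hx
    rcases List.mem_filter.1 hx with ⟨-, hx2⟩
    exact summary_take K A ρ (le_of_lt (of_decide_eq_true hx2))
  · simp only [List.map_cons, List.map_nil]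
    rw [summary_take K A ρ (le_refl k)]

lemma filter_map_pointwise {γ : Type _} (f f' : ℕ → γ) :
    ∀ (L L' : List ℕ) (p p' : ℕ → Bool), L.length = L'.length →
    (∀ i (h1 : i < L.length) (h2 : i < L'.length), f (L.get ⟨i, h1⟩) = f' (L'.get ⟨i, h2⟩)) →
    (∀ i (h1 : i < L.length) (h2 : i < L'.length), p (L.get ⟨i, h1⟩) = p' (L'.get ⟨i, h2⟩)) →
    (L.filter p).map f = (L'.filter p').map f' := by
  intro L
  induction L with
  | nil =>
    intro L' p p' hlen _ _
    cases L' with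
    | nil => rfl
    | cons x L' => simp at hlen
  | cons x L ih =>
    intro L' p p' hlen hf hp
    cases L' with
    | nil => simp at hlen
    | cons x' L' =>
      have hx : f x = f' x' := hf 0 (by simp) (by simp)
      have hpx : p x = p' x' := hp 0 (by simp) (by simp)
      have ihh := ih L' p p' (by simpa using hlen)
        (fun i h1 h2 => hf (i+1) (by simpa using h1) (by simpa using h2))
        (fun i h1 h2 => hp (i+1) (by simpa using h1) (by simpa using h2))
      simp only [List.filter_cons, ← hpx]
      cases hc : p x <;> simp [hc, ihh, hx]

lemma psList_filter (ρ : List S) (h : ℕ) :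
    (psList K A ρ (h+1)).filter
      (fun x => @decide (x ∈ PS K A ρ h) (Classical.propDecidable _)) = psList K A ρ h := by
  unfold psList
  rw [List.filter_filter]
  apply List.filter_congr
  intro a _
  by_cases hA : a ∈ PS K A ρ h
  · have hB : a ∈ PS K A ρ (h+1) := PS_mono K A ρ h hA
    simp [hA, hB]
  · simp [hA]

lemma bisim_match {h : ℕ}
    (IH : ∀ ρ ρ' : List S, ρ ≠ [] → ρ' ≠ [] →
      samplingWord K A ρ h = samplingWord K A ρ' h → PrefixBisim K A h ρ ρ')
    {ρ ρ' : List S} (hρ : ρ ≠ []) (hρ' : ρ' ≠ [])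
    (hw : samplingWord K A ρ (h+1) = samplingWord K A ρ' (h+1)) :
    ∀ ν, ProperPref ν ρ → ∃ ν', ProperPref ν' ρ' ∧ PrefixBisim K A h ν ν' := by
  rintro ν ⟨hνne, hνpre, hνlt⟩
  have hνtake : ν = ρ.take ν.length := List.prefix_iff_eq_take.1 hνpre
  have hk1 : 1 ≤ ν.length := List.length_pos_iff.2 hνne
  have hk2 : ν.length < ρ.length := hνlt
  obtain ⟨k0, hk0PS, hk01, hk0lt, hW0⟩ : ∃ k0, k0 ∈ PS K A ρ (h+1) ∧ 1 ≤ k0 ∧ k0 < ρ.length ∧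
      samplingWord K A (ρ.take k0) h = samplingWord K A (ρ.take ν.length) h := by
    by_cases hkPS : ν.length ∈ PS K A ρ (h+1)
    · exact ⟨ν.length, hkPS, hk1, hk2, rfl⟩
    · have hkPSh : ν.length ∉ PS K A ρ h := fun hc => hkPS (PS_mono K A ρ h hc)
      have hk1' : 1 < ν.length := by
        rcases Nat.eq_or_lt_of_le hk1 with hc | hc
        · exact absurd (hc ▸ PS_one_mem K A ρ (h+1)) hkPS
        · exact hc
      have hane : {m | m ∈ PS K A ρ h ∧ m < ν.length}.Nonempty :=
        ⟨1, PS_one_mem K A ρ h, hk1'⟩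
      have habdd : BddAbove {m | m ∈ PS K A ρ h ∧ m < ν.length} :=
        ⟨ν.length, fun m hm => le_of_lt hm.2⟩
      obtain ⟨a, haMem, haUb⟩ : ∃ a, (a ∈ PS K A ρ h ∧ a < ν.length) ∧
          ∀ m, m ∈ PS K A ρ h → m < ν.length → m ≤ a :=
        ⟨_, Nat.sSup_mem hane habdd, fun m h1 h2 => le_csSup habdd ⟨h1, h2⟩⟩
      have hbne : {m | m ∈ PS K A ρ h ∧ ν.length < m}.Nonempty :=
        ⟨ρ.length, PS_len_mem K A ρ h, hk2⟩
      obtain ⟨b, hbMem, hbLb⟩ : ∃ b, (b ∈ PS K A ρ h ∧ ν.length < b) ∧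
          ∀ m, m ∈ PS K A ρ h → ν.length < m → b ≤ m :=
        ⟨_, Nat.sInf_mem hbne, fun m h1 h2 => Nat.sInf_le ⟨h1, h2⟩⟩
      have hak : a < ν.length := haMem.2
      have hkb : ν.length < b := hbMem.2
      have hcons : ∀ m ∈ PS K A ρ h, m ≤ a ∨ b ≤ m := by
        intro m hm
        rcases lt_trichotomy m ν.length with h' | h' | h'
        · exact Or.inl (haUb m hm h')
        · exact absurd (h' ▸ hm) hkPSh
        · exact Or.inr (hbLb m hm h')
      have ha1 : 1 ≤ a := ((PS_subset_Icc K A ρ hρ h) haMem.1).1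
      have hk0ne : {m | m ∈ Set.Icc (a+1) (b-1) ∧
          Summary K A (ρ.take m) = Summary K A (ρ.take ν.length)}.Nonempty :=
        ⟨ν.length, Set.mem_Icc.2 ⟨by omega, by omega⟩, rfl⟩
      obtain ⟨k0, hk0, hk0min⟩ : ∃ k0, (k0 ∈ Set.Icc (a+1) (b-1) ∧
          Summary K A (ρ.take k0) = Summary K A (ρ.take ν.length)) ∧
          ∀ x, (x ∈ Set.Icc (a+1) (b-1) ∧
            Summary K A (ρ.take x) = Summary K A (ρ.take ν.length)) → k0 ≤ x :=
        ⟨_, Nat.sInf_mem hk0ne, fun x hx => Nat.sInf_le hx⟩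
      have hk0le : k0 ≤ ν.length := hk0min _ ⟨Set.mem_Icc.2 ⟨by omega, by omega⟩, rfl⟩
      have hk0Icc := hk0.1
      rw [Set.mem_Icc] at hk0Icc
      have hk0Skel : k0 ∈ Skel K A ρ a b := by
        refine (mem_Skel K A).2 (Or.inr ⟨hk0.1, fun m hm hsum => ?_⟩)
        exact hk0min m ⟨hm, hsum.trans hk0.2⟩
      have hk0PS : k0 ∈ PS K A ρ (h+1) :=
        (mem_PS_succ K A).2 (Or.inr ⟨a, haMem.1, b, hbMem.1, by omega, hcons, hk0Skel⟩)
      refine ⟨k0, hk0PS, by omega, by omega, ?_⟩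
      rw [word_take K A hρ (by omega : 1 ≤ k0) (by omega : k0 ≤ ρ.length) h,
        word_take K A hρ (by omega : 1 ≤ ν.length) (by omega : ν.length ≤ ρ.length) h]
      congr 1
      · congr 1
        apply List.filter_congr
        intro x hx
        have hxPS := (mem_psList K A hρ).1 hx
        apply decide_eq_decide.2
        rcases hcons x hxPS with h' | h' <;> constructor <;> intro <;> omega
      · rw [hk0.2]
  rcases List.mem_iff_get.1 ((mem_psList K A hρ).2 hk0PS) with ⟨⟨n, hn⟩, hneq⟩
  have hlen := word_len K A hw
  have hn' : n < (psList K A ρ' (h+1)).length := by omega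
  have hk'PS : (psList K A ρ' (h+1)).get ⟨n, hn'⟩ ∈ PS K A ρ' (h+1) :=
    psList_get_mem K A hρ' hn'
  have hk'Icc := (PS_subset_Icc K A ρ' hρ' (h+1)) hk'PS
  rw [Set.mem_Icc] at hk'Icc
  have hnlt : n < (psList K A ρ (h+1)).length - 1 := by
    by_contra hcon
    push_neg at hcon
    have hneq2 : n = (psList K A ρ (h+1)).length - 1 := by omega
    have hl : (psList K A ρ (h+1)).get ⟨n, hn⟩ =
        (psList K A ρ (h+1)).get ⟨(psList K A ρ (h+1)).length - 1, by omega⟩ := by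
      congr 1
      exact Fin.ext hneq2
    rw [psList_get_last K A hρ (h := h+1), hneq] at hl
    omega
  have hk'lt : (psList K A ρ' (h+1)).get ⟨n, hn'⟩ < ρ'.length := by
    have hl' : (psList K A ρ' (h+1)).length - 1 < (psList K A ρ' (h+1)).length := by omega
    have hlt := (psList_sorted K A ρ' (h+1)).sortedLT.strictMono_get
      (show (⟨n, hn'⟩ : Fin _) < ⟨(psList K A ρ' (h+1)).length - 1, hl'⟩ from
        Fin.mk_lt_mk.2 (by omega))
    rw [psList_get_last K A hρ' (h := h+1) hl'] at hlt
    exact hlt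
  have hsum : Summary K A (ρ.take k0) =
      Summary K A (ρ'.take ((psList K A ρ' (h+1)).get ⟨n, hn'⟩)) := by
    have hwg := word_get K A hw n hn hn'
    rw [hneq] at hwg
    exact hwg
  have hWmain : samplingWord K A (ρ.take k0) h =
      samplingWord K A (ρ'.take ((psList K A ρ' (h+1)).get ⟨n, hn'⟩)) h := by
    rw [word_take K A hρ (by omega : 1 ≤ k0) (by omega : k0 ≤ ρ.length) h,
      word_take K A hρ' (by omega : 1 ≤ (psList K A ρ' (h+1)).get ⟨n, hn'⟩)
        (by omega : (psList K A ρ' (h+1)).get ⟨n, hn'⟩ ≤ ρ'.length) h]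
    congr 1
    · rw [← psList_filter K A ρ h, ← psList_filter K A ρ' h, List.filter_filter,
        List.filter_filter]
      apply filter_map_pointwise
      · exact hlen
      · exact word_get K A hw
      · intro i h1 h2
        have hc := corr K A hρ hρ' hw h (by omega) i h1 h2
        have hord : (psList K A ρ (h+1)).get ⟨i, h1⟩ < k0 ↔
            (psList K A ρ' (h+1)).get ⟨i, h2⟩ < (psList K A ρ' (h+1)).get ⟨n, hn'⟩ := by
          rw [← hneq]
          constructor
          · intro hlt
            exact (psList_sorted K A ρ' (h+1)).sortedLT.strictMono_get (Fin.mk_lt_mk.2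
              (Fin.mk_lt_mk.1 ((psList_sorted K A ρ (h+1)).sortedLT.strictMono_get.lt_iff_lt.1 hlt)))
          · intro hlt
            exact (psList_sorted K A ρ (h+1)).sortedLT.strictMono_get (Fin.mk_lt_mk.2
              (Fin.mk_lt_mk.1 ((psList_sorted K A ρ' (h+1)).sortedLT.strictMono_get.lt_iff_lt.1 hlt)))
        rw [← @Bool.decide_and _ _ (Classical.propDecidable _) _ (Classical.propDecidable _),
          ← @Bool.decide_and _ _ (Classical.propDecidable _) _ (Classical.propDecidable _)]
        simp only [decide_eq_decide]
        constructor
        · rintro ⟨hB, hA⟩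
          exact ⟨hord.1 hB, hc.1 hA⟩
        · rintro ⟨hB, hA⟩
          exact ⟨hord.2 hB, hc.2 hA⟩
    · rw [hsum]
  refine ⟨ρ'.take ((psList K A ρ' (h+1)).get ⟨n, hn'⟩), ⟨?_, List.take_prefix _ _, ?_⟩, ?_⟩
  · exact List.length_pos_iff.1 (by rw [List.length_take]; omega)
  · rw [List.length_take]; omega
  · apply IH
    · exact hνne
    · exact List.length_pos_iff.1 (by rw [List.length_take]; omega)
    · rw [hνtake, ← hW0, hWmain]

lemma bisim_symm : ∀ (h : ℕ) (ρ ρ' : List S), PrefixBisim K A h ρ ρ' → PrefixBisim K A h ρ' ρ := by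
  intro h
  induction h with
  | zero => exact fun ρ ρ' hs => hs.symm
  | succ h ih =>
    rintro ρ ρ' ⟨h1, h2, h3⟩
    refine ⟨h1.symm, fun ν hp => ?_, fun ν' hp => ?_⟩
    · rcases h3 ν hp with ⟨μ, hμ1, hμ2⟩
      exact ⟨μ, hμ1, ih _ _ hμ2⟩
    · rcases h2 ν' hp with ⟨μ, hμ1, hμ2⟩
      exact ⟨μ, hμ1, ih _ _ hμ2⟩

lemma main_word : ∀ (h : ℕ) (ρ ρ' : List S), ρ ≠ [] → ρ' ≠ [] →
    samplingWord K A ρ h = samplingWord K A ρ' h → PrefixBisim K A h ρ ρ' := by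
  intro h
  induction h with
  | zero =>
    intro ρ ρ' hρ hρ' hw
    exact summary_eq_of_word_eq K A hρ hρ' hw
  | succ h ih =>
    intro ρ ρ' hρ hρ' hw
    refine ⟨summary_eq_of_word_eq K A hρ hρ' hw, bisim_match K A ih hρ hρ' hw, fun ν' hν' => ?_⟩
    rcases bisim_match K A ih hρ' hρ hw.symm ν' hν' with ⟨ν, hν1, hν2⟩
    exact ⟨ν, hν1, bisim_symm K A h _ _ hν2⟩

end Aux

/-- two traces with the same `h`-sampling word are `h`-prefix bisimilar. -/
theorem stmt10 [Inhabited S] (K : Kripke AP S) (A : ∀ ℓ : ι, NFA (Set AP) (Q ℓ))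
    (h : ℕ) (ρ ρ' : List S) (hρ : K.IsTrace ρ) (hρ' : K.IsTrace ρ')
    (hw : samplingWord K A ρ h = samplingWord K A ρ' h) :
    PrefixBisim K A h ρ ρ' := by
  exact main_word K A h ρ ρ' hρ.1 hρ'.1 hw
end

section
/- For a trace ρ and two positions ℓ < ℓ' of ρ with equal prefix summaries S(ρ(1,ℓ)) = S(ρ(1,ℓ')), the word ρ' = ρ(1,ℓ) · ρ(ℓ'+1, |ρ|) is a trace of K induced by ρ with |ρ'| < |ρ|, and the prefixes ρ'(1,ℓ) and ρ(1,ℓ') have the same summary. -/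
variable {AP S : Type} {ι : Type} {Q : ι → Type}

/-- contraction at two positions with equal prefix summaries yields a shorter
induced trace whose corresponding prefix has the same summary. Positions are 1-based:
`ρ(1,ℓ) = ρ.take l` and `ρ(ℓ'+1,|ρ|) = ρ.drop l'`. -/
theorem stmt13 [Inhabited S] (K : Kripke AP S) (A : ∀ ℓ : ι, NFA (Set AP) (Q ℓ))
    (ρ : List S) (hρ : K.IsTrace ρ)
    (l l' : ℕ) (hl : 1 ≤ l) (hll' : l < l') (hl' : l' < ρ.length)
    (hsum : Summary K A (ρ.take l) = Summary K A (ρ.take l')) :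
    InducedTrace K ρ (ρ.take l ++ ρ.drop l') ∧
    (ρ.take l ++ ρ.drop l').length < ρ.length ∧
    Summary K A ((ρ.take l ++ ρ.drop l').take l) = Summary K A (ρ.take l') := by
  obtain ⟨hne, hch⟩ := hρ
  have hlρ : l ≤ ρ.length := by omega
  have htl : (ρ.take l).length = l := by simp [Nat.min_eq_left hlρ]
  -- last element of `ρ.take k`
  have getlast : ∀ k, 1 ≤ k → k ≤ ρ.length →
      (ρ.take k).getLast? = some (ρ.getD (k - 1) default) := by
    intro k h1 h2
    rw [List.getLast?_eq_getElem?, List.getElem?_take, List.length_take,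
      Nat.min_eq_left h2, List.getD_eq_getElem?_getD]
    · rw [if_pos (by omega), List.getElem?_eq_getElem (by omega)]
      rfl
  -- from the summary equality: equal last states
  have hlast : ρ.getD (l - 1) default = ρ.getD (l' - 1) default := by
    have := congrArg (fun p => p.2.2) hsum
    simp only [Summary, List.getLastI_eq_getLast?] at this
    rwa [getlast l hl hlρ, getlast l' (by omega) (by omega)] at this
  -- the chain relation at position l' - 1
  have hR : K.R (ρ.getD (l - 1) default) (ρ.getD l' default) := by
    rw [hlast, List.getD_eq_getElem ρ default (by omega : l' - 1 < ρ.length),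
      List.getD_eq_getElem ρ default hl']
    have := List.isChain_iff_getElem.mp hch (l' - 1) (by omega)
    simpa [show l' - 1 + 1 = l' by omega] using this
  -- the contracted word is a trace
  have htrace : K.IsTrace (ρ.take l ++ ρ.drop l') := by
    constructor
    · intro h
      have := congrArg List.length h
      simp [Nat.min_eq_left hlρ] at this
      omega
    · show List.IsChain _ _; rw [List.isChain_append]
      refine ⟨List.IsChain.take hch l, List.IsChain.drop hch l', ?_⟩
      intro x hx y hy
      rw [getlast l hl hlρ] at hx
      rw [List.head?_drop, List.getElem?_eq_getElem hl'] at hy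
      obtain rfl : ρ.getD (l - 1) default = x := by simpa using hx
      obtain rfl : ρ[l'] = y := by simpa using hy
      rw [← List.getD_eq_getElem ρ default hl']
      exact hR
  refine ⟨⟨htrace, ?_⟩, ?_, ?_⟩
  · -- index sequence
    refine ⟨List.range l ++ (List.range (ρ.length - l')).map (· + l'), ?_, ?_, ?_, ?_⟩
    · show List.IsChain _ _; rw [List.isChain_append]
      refine ⟨(List.pairwise_lt_range (n := l)).isChain, ?_, ?_⟩
      · exact (((List.pairwise_lt_range (n := _)).map _ (fun a b h => by omega))).isChain
      · intro x hx y hy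
        obtain ⟨m, rfl⟩ : ∃ m, l = m + 1 := ⟨l - 1, by omega⟩
        rw [List.range_succ] at hx
        simp at hx
        rw [List.head?_map, List.head?_range, if_neg (by omega)] at hy
        simp at hy
        omega
    · rw [List.head?_append, List.head?_range, if_neg (by omega)]
      rfl
    · rw [List.getLast?_append, List.getLast?_map]
      obtain ⟨m, hm⟩ : ∃ m, ρ.length - l' = m + 1 := ⟨ρ.length - l' - 1, by omega⟩
      rw [hm, List.range_succ]
      simp
      omega
    · rw [List.map_append, List.map_map]
      congr 1
      · apply List.ext_getElem
        · simpa using htl.symm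
        · intro i h1 h2
          simp only [List.getElem_map, List.getElem_range, List.getElem_take]
          exact (List.getD_eq_getElem ρ default
            (show i < ρ.length by rw [htl] at h1; omega)).symm
      · apply List.ext_getElem
        · simp
        · intro i h1 h2
          simp only [List.getElem_map, List.getElem_range, Function.comp_apply,
            List.getElem_drop]
          rw [List.getD_eq_getElem ρ default
            (show i + l' < ρ.length by rw [List.length_drop] at h1; omega)]
          congr 1
          omega
  · simp only [List.length_append, List.length_take, List.length_drop,
      Nat.min_eq_left hlρ]
    omega
  · rw [List.take_append_of_le_length (le_of_eq htl.symm), List.take_take,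
      Nat.min_self, hsum]
end

section
/- Let ρ and ρ' be h-prefix bisimilar traces of K with h ≥ 1. Then for every AĀBB̄Ē formula φ in PNF with atomic formulas in spec and depthB(⟨B⟩φ) ≤ h: K, ρ ⊨ ⟨B⟩φ if and only if K, ρ' ⊨ ⟨B⟩φ, assuming the inductive hypothesis that (h−1)-prefix bisimilar traces agree on all formulas of B-depth at most h−1. -/
variable {AP S : Type} {ι : Type} {Q : ι → Type}

lemma trace_of_properPref {AP S : Type} (K : Kripke AP S) {ν ρ : List S}
    (hρ : K.IsTrace ρ) (hν : ProperPref ν ρ) : K.IsTrace ν :=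
  ⟨hν.1, hρ.2.prefix hν.2.1⟩

/-- the `⟨B⟩` case of the agreement lemma, assuming the inductive hypothesis
at level `h − 1`. -/
theorem stmt16 [Inhabited S] (K : Kripke AP S) (A : ∀ ℓ : ι, NFA (Set AP) (Q ℓ))
    (L : ι → Language (Set AP))
    (h : ℕ) (hh : 1 ≤ h) (ρ ρ' : List S)
    (hρ : K.IsTrace ρ) (hρ' : K.IsTrace ρ')
    (hbis : PrefixBisim K A h ρ ρ')
    (φ : HS ι) (hpnf : φ.IsPNF) (hnoE : φ.NoE)
    (hd : (HS.dia HSMod.B φ).depthB ≤ h)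
    (IH : ∀ ν ν', K.IsTrace ν → K.IsTrace ν' → PrefixBisim K A (h - 1) ν ν' →
        ∀ ψ : HS ι, ψ.IsPNF → ψ.NoE → ψ.depthB ≤ h - 1 →
          (ψ.sat K L ν ↔ ψ.sat K L ν')) :
    (HS.dia HSMod.B φ).sat K L ρ ↔ (HS.dia HSMod.B φ).sat K L ρ' := by
  obtain ⟨k, rfl⟩ : ∃ k, h = k + 1 := ⟨h - 1, (Nat.succ_pred_eq_of_pos hh).symm⟩
  obtain ⟨-, hfwd, hbwd⟩ := hbis
  have hdφ : φ.depthB ≤ k := by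
    have := hd; simp [HS.depthB] at this; omega
  constructor
  · rintro ⟨ν, hν, hsat⟩
    obtain ⟨ν', hν', hb⟩ := hfwd ν hν
    exact ⟨ν', hν', (IH ν ν' (trace_of_properPref K hρ hν)
      (trace_of_properPref K hρ' hν') (by simpa using hb) φ hpnf hnoE (by simpa using hdφ)).mp hsat⟩
  · rintro ⟨ν', hν', hsat⟩
    obtain ⟨ν, hν, hb⟩ := hbwd ν' hν'
    exact ⟨ν, hν, (IH ν ν' (trace_of_properPref K hρ hν)
      (trace_of_properPref K hρ' hν') (by simpa using hb) φ hpnf hnoE (by simpa using hdφ)).mpr hsat⟩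
end
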